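/- arXiv:math/0311456 — 6 statements merged into one kernel-verified Lean document; each statement's English description precedes it below -/
import Mathlib

section
/- Let 𝔤 be a finite-dimensional Lie subalgebra of the Lie algebra of smooth vector fields on ℝ containing ∂/∂x. Then every element of 𝔤 is a real-analytic vector field. -/
open Set NormedSpace

noncomputable def vfBracket (f g : ℝ → ℝ) : ℝ → ℝ := fun x => f x * deriv g x - g x * deriv f x

/-- Every element of a finite-dimensional Lie algebra of smooth vector fields on `ℝ`
containing `∂/∂x` is real-analytic. -/
theorem stmt1 (g : Submodule ℝ (ℝ → ℝ)) [FiniteDimensional ℝ g]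
    (hsmooth : ∀ f ∈ g, ContDiff ℝ (⊤ : ℕ∞) f)
    (hclosed : ∀ f₁ ∈ g, ∀ f₂ ∈ g, vfBracket f₁ f₂ ∈ g)
    (hone : (fun _ => (1 : ℝ)) ∈ g) :
    ∀ f ∈ g, AnalyticOn ℝ f Set.univ := by
  classical
  intro f hf
  have hdiff : ∀ h ∈ g, Differentiable ℝ h := fun h hh => (hsmooth h hh).differentiable (by simp)
  have hderiv_mem : ∀ h ∈ g, deriv h ∈ g := by
    intro h hh
    have hb := hclosed _ hone h hh
    have he : vfBracket (fun _ => (1:ℝ)) h = deriv h := by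
      funext x; simp [vfBracket]
    rwa [he] at hb
  set n := Module.finrank ℝ g with hn
  set b : Module.Basis (Fin n) ℝ g := Module.finBasis ℝ g with hb
  have hbmem : ∀ i, deriv ((b i : ℝ → ℝ)) ∈ g := fun i => hderiv_mem _ (b i).2
  set A : Matrix (Fin n) (Fin n) ℝ :=
    Matrix.of fun j i => b.repr ⟨deriv ((b i : ℝ → ℝ)), hbmem i⟩ j with hA
  -- the derivative of a basis function is a linear combination of basis functions
  have hAder : ∀ i x, deriv ((b i : ℝ → ℝ)) x = ∑ j, A j i * (b j : ℝ → ℝ) x := by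
    intro i x
    have h1 : (⟨deriv ((b i : ℝ → ℝ)), hbmem i⟩ : g) = ∑ j, A j i • b j :=
      (b.sum_repr ⟨deriv ((b i : ℝ → ℝ)), hbmem i⟩).symm
    have h2 : deriv ((b i : ℝ → ℝ)) = ((∑ j, A j i • b j : g) : ℝ → ℝ) := by
      rw [← h1]
    rw [h2, AddSubmonoidClass.coe_finset_sum, Finset.sum_apply]
    simp
  set M : (Fin n → ℝ) →L[ℝ] (Fin n → ℝ) :=
    LinearMap.toContinuousLinearMap (Matrix.mulVecLin A.transpose) with hM
  set Y : ℝ → Fin n → ℝ := fun x i => (b i : ℝ → ℝ) x with hY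
  have hY' : ∀ x, HasDerivAt Y (M (Y x)) x := by
    intro x
    rw [hasDerivAt_pi]
    intro i
    have h1 : HasDerivAt (fun x => (b i : ℝ → ℝ) x) (deriv ((b i : ℝ → ℝ)) x) x :=
      (hdiff _ (b i).2 x).hasDerivAt
    have h2 : M (Y x) i = deriv ((b i : ℝ → ℝ)) x := by
      rw [hAder i x]
      simp [hM, Matrix.mulVecLin_apply, Matrix.mulVec, Matrix.vecMul, dotProduct, Matrix.transpose_apply, hY, mul_comm]
    rw [h2]
    exact h1
  set Z : ℝ → Fin n → ℝ := fun x => exp (x • M) (Y 0) with hZ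
  have hZ' : ∀ x, HasDerivAt Z (M (Z x)) x := by
    intro x
    have h1 : HasDerivAt (fun u : ℝ => exp (u • M)) (M * exp (x • M)) x :=
      hasDerivAt_exp_smul_const' M x
    have h2 := h1.clm_apply (hasDerivAt_const x (Y 0))
    simpa [ContinuousLinearMap.mul_apply, hZ] using h2
  have h0 : Y 0 = Z 0 := by
    simp [hZ, exp_zero]
  have key : ∀ x : ℝ, Y x = Z x := by
    intro x
    have hK : ∀ t : ℝ, LipschitzOnWith ‖M‖₊ (fun y => M y) (univ : Set (Fin n → ℝ)) :=
      fun _ => M.lipschitz.lipschitzOnWith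
    have hmem : x ∈ Ioo (-(|x|+1)) (|x|+1) := by
      constructor
      · nlinarith [neg_abs_le x, abs_nonneg x]
      · nlinarith [le_abs_self x]
    have h0mem : (0:ℝ) ∈ Ioo (-(|x|+1)) (|x|+1) := by
      constructor
      · nlinarith [abs_nonneg x]
      · nlinarith [abs_nonneg x]
    exact ODE_solution_unique_of_mem_Ioo (fun t _ => hK t) h0mem
      (fun t _ => ⟨hY' t, trivial⟩) (fun t _ => ⟨hZ' t, trivial⟩) h0 hmem
  set c : Fin n → ℝ := fun i => b.repr ⟨f, hf⟩ i with hc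
  have hfx : f = fun x => ∑ i, c i * Z x i := by
    funext x
    have h1 : (⟨f, hf⟩ : g) = ∑ i, c i • b i := (b.sum_repr ⟨f, hf⟩).symm
    have h2 : f = ((∑ i, c i • b i : g) : ℝ → ℝ) := by rw [← h1]
    rw [h2, AddSubmonoidClass.coe_finset_sum, Finset.sum_apply]
    refine Finset.sum_congr rfl fun i _ => ?_
    have : (b i : ℝ → ℝ) x = Y x i := rfl
    simp [this, key x]
  rw [hfx]
  apply AnalyticOnNhd.analyticOn
  intro x _
  apply Finset.analyticAt_fun_sum
  intro i _
  apply AnalyticAt.mul analyticAt_const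
  have h1 : AnalyticAt ℝ (fun u : ℝ => u • M) x :=
    ((1 : ℝ →L[ℝ] ℝ).smulRight M).analyticAt x
  have h2 : AnalyticAt ℝ (exp ∘ fun u : ℝ => u • M) x :=
    AnalyticAt.comp (f := fun u : ℝ => u • M) (exp_analytic (x • M)) h1
  have h3 : AnalyticAt ℝ
      (((ContinuousLinearMap.apply ℝ (Fin n → ℝ)) (Y 0)) ∘ (exp ∘ fun u : ℝ => u • M)) x :=
    ((((ContinuousLinearMap.apply ℝ (Fin n → ℝ)) (Y 0))).analyticAt _).comp h2
  have h4 : AnalyticAt ℝ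
      ((ContinuousLinearMap.proj (R := ℝ) (φ := fun _ : Fin n => ℝ) i) ∘
        (((ContinuousLinearMap.apply ℝ (Fin n → ℝ)) (Y 0)) ∘ (exp ∘ fun u : ℝ => u • M))) x :=
    ((ContinuousLinearMap.proj (R := ℝ) (φ := fun _ : Fin n => ℝ) i).analyticAt _).comp h3
  exact h4
end

section
/- Let 𝔤 be a finite-dimensional Lie subalgebra of smooth vector fields on ℝ containing ∂/∂x, with dim 𝔤 ≥ 3. If g·∂/∂x ∈ 𝔤 where g is analytic with g(x) = x^N + higher order terms at the origin for some N ≥ 2, and N is maximal among such elements, then N = 2. -/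
open Finset
open scoped ContDiff

private lemma iterDeriv_sub {f g : ℝ → ℝ} (hf : ContDiff ℝ ∞ f) (hg : ContDiff ℝ ∞ g)
    (n : ℕ) (x : ℝ) :
    iteratedDeriv n (fun y => f y - g y) x = iteratedDeriv n f x - iteratedDeriv n g x := by
  have e : (fun y => f y - g y) = f - g := rfl
  rw [e, ← iteratedDerivWithin_univ, ← iteratedDerivWithin_univ, ← iteratedDerivWithin_univ]
  exact iteratedDerivWithin_sub (Set.mem_univ x) uniqueDiffOn_univ
    (hf.contDiffWithinAt.of_le (by exact_mod_cast (le_top : (n : ℕ∞) ≤ ⊤)))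
    (hg.contDiffWithinAt.of_le (by exact_mod_cast (le_top : (n : ℕ∞) ≤ ⊤)))

private lemma iterDeriv_hasDerivAt {f : ℝ → ℝ} (hf : ContDiff ℝ ∞ f) (m : ℕ) (y : ℝ) :
    HasDerivAt (iteratedDeriv m f) (iteratedDeriv (m + 1) f y) y := by
  have hd : Differentiable ℝ (iteratedDeriv m f) :=
    hf.differentiable_iteratedDeriv m (by exact_mod_cast ENat.coe_lt_top m)
  have := (hd y).hasDerivAt
  rwa [show deriv (iteratedDeriv m f) y = iteratedDeriv (m + 1) f y by
    rw [iteratedDeriv_succ]] at this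

private lemma iterDeriv_mul {f g : ℝ → ℝ} (hf : ContDiff ℝ ∞ f) (hg : ContDiff ℝ ∞ g)
    (n : ℕ) (x : ℝ) :
    iteratedDeriv n (fun y => f y * g y) x =
      ∑ k ∈ range (n + 1), (n.choose k : ℝ) *
        (iteratedDeriv k f x * iteratedDeriv (n - k) g x) := by
  induction n generalizing x with
  | zero => simp
  | succ n IH =>
    have hfun : iteratedDeriv n (fun y => f y * g y) =
        fun y => ∑ k ∈ range (n + 1), (n.choose k : ℝ) *
          (iteratedDeriv k f y * iteratedDeriv (n - k) g y) := funext fun y => IH y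
    have H : HasDerivAt
        (fun y => ∑ k ∈ range (n + 1), (n.choose k : ℝ) *
          (iteratedDeriv k f y * iteratedDeriv (n - k) g y))
        (∑ k ∈ range (n + 1), (n.choose k : ℝ) *
          (iteratedDeriv (k + 1) f x * iteratedDeriv (n - k) g x +
           iteratedDeriv k f x * iteratedDeriv (n - k + 1) g x)) x := by
      refine HasDerivAt.fun_sum fun k _ => ?_
      exact ((iterDeriv_hasDerivAt hf k x).mul (iterDeriv_hasDerivAt hg (n - k) x)).const_mul _
    rw [iteratedDeriv_succ, hfun, H.deriv,
      Finset.sum_choose_succ_mul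
        (fun i j => iteratedDeriv i f x * iteratedDeriv j g x) n]
    simp only [mul_add]
    rw [Finset.sum_add_distrib, add_comm]
    congr 1
    refine Finset.sum_congr rfl fun k hk => ?_
    have hk' : k ≤ n := by simpa [Nat.lt_succ_iff] using hk
    have : n + 1 - k = n - k + 1 := by omega
    rw [this]

/-- In a finite-dimensional Lie algebra `𝔤` of smooth vector fields on `ℝ` containing `∂/∂x`
with `dim 𝔤 ≥ 3`, if `g ∂/∂x ∈ 𝔤` with `g` analytic, `g(x) = x^N + ⋯` at the origin for `N ≥ 2`,
and `N` is maximal (no element of `𝔤` vanishes at `0` to order `> N` with nonzero leading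
coefficient), then `N = 2`. -/
theorem stmt3 (G : Submodule ℝ (ℝ → ℝ)) [FiniteDimensional ℝ G]
    (hsmooth : ∀ f ∈ G, ContDiff ℝ (⊤ : ℕ∞) f)
    (hclosed : ∀ f₁ ∈ G, ∀ f₂ ∈ G, vfBracket f₁ f₂ ∈ G)
    (hone : (fun _ => (1 : ℝ)) ∈ G)
    (hdim : 3 ≤ Module.finrank ℝ G)
    (g : ℝ → ℝ) (hgG : g ∈ G) (hga : AnalyticAt ℝ g 0)
    (N : ℕ) (hN : 2 ≤ N)
    (hvanish : ∀ k < N, iteratedDeriv k g 0 = 0)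
    (hlead : iteratedDeriv N g 0 = (N.factorial : ℝ))
    (hmax : ∀ h ∈ G, ∀ M : ℕ, N < M →
      ¬ ((∀ k < M, iteratedDeriv k h 0 = 0) ∧ iteratedDeriv M h 0 ≠ 0)) :
    N = 2 := by
  by_contra hne
  have hN3 : 3 ≤ N := by omega
  have hg : ContDiff ℝ ∞ g := (hsmooth g hgG).of_le (by exact_mod_cast le_top)
  have hg1 : ContDiff ℝ ∞ (deriv g) := (contDiff_infty_iff_deriv.mp hg).2
  have hg2 : ContDiff ℝ ∞ (deriv (deriv g)) := (contDiff_infty_iff_deriv.mp hg1).2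
  -- deriv g ∈ G
  have hg1G : deriv g ∈ G := by
    have hb := hclosed _ hone _ hgG
    have e : vfBracket (fun _ => (1 : ℝ)) g = deriv g := by
      funext x; simp [vfBracket]
    rwa [e] at hb
  set h : ℝ → ℝ := vfBracket (deriv g) g with hh
  have hhG : h ∈ G := hclosed _ hg1G _ hgG
  -- abbreviation for derivatives of g at 0
  set a : ℕ → ℝ := fun k => iteratedDeriv k g 0 with ha
  have ha1 : ∀ k, iteratedDeriv k (deriv g) 0 = a (k + 1) := fun k =>
    (congrFun (iteratedDeriv_succ' (n := k) (f := g)) 0).symm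
  have ha2 : ∀ k, iteratedDeriv k (deriv (deriv g)) 0 = a (k + 2) := by
    intro k
    show _ = iteratedDeriv (k + 1 + 1) g 0
    rw [iteratedDeriv_succ', iteratedDeriv_succ']
  have haN : a N = (N.factorial : ℝ) := hlead
  -- formula for iterated derivatives of h at 0
  have hform : ∀ n : ℕ, iteratedDeriv n h 0 =
      (∑ k ∈ range (n + 1), (n.choose k : ℝ) * (a (k + 1) * a (n - k + 1))) -
      (∑ k ∈ range (n + 1), (n.choose k : ℝ) * (a k * a (n - k + 2))) := by
    intro n
    have e : h = fun y => (fun z => deriv g z * deriv g z) y -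
        (fun z => g z * deriv (deriv g) z) y := rfl
    rw [e, iterDeriv_sub (hg1.mul hg1) (hg.mul hg2), iterDeriv_mul hg1 hg1,
      iterDeriv_mul hg hg2]
    congr 1
    · exact Finset.sum_congr rfl fun k _ => by rw [ha1, ha1]
    · exact Finset.sum_congr rfl fun k _ => by rw [ha2]
  have haz : ∀ k < N, a k = 0 := hvanish
  -- vanishing below order 2N-2
  have hvan : ∀ n < 2 * N - 2, iteratedDeriv n h 0 = 0 := by
    intro n hn
    rw [hform]
    have h1 : ∑ k ∈ range (n + 1), (n.choose k : ℝ) * (a (k + 1) * a (n - k + 1)) = 0 := by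
      refine Finset.sum_eq_zero fun k hk => ?_
      have hk' : k ≤ n := by simpa [Nat.lt_succ_iff] using hk
      rcases lt_or_ge (k + 1) N with hlt | hge
      · rw [haz _ hlt]; ring
      · rw [haz (n - k + 1) (by omega)]; ring
    have h2 : ∑ k ∈ range (n + 1), (n.choose k : ℝ) * (a k * a (n - k + 2)) = 0 := by
      refine Finset.sum_eq_zero fun k hk => ?_
      have hk' : k ≤ n := by simpa [Nat.lt_succ_iff] using hk
      rcases lt_or_ge k N with hlt | hge
      · rw [haz _ hlt]; ring
      · rw [haz (n - k + 2) (by omega)]; ring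
    rw [h1, h2, sub_zero]
  -- value at order 2N-2
  have hval : iteratedDeriv (2 * N - 2) h 0 =
      (((2 * N - 2).choose (N - 1) : ℝ) - ((2 * N - 2).choose N : ℝ)) *
        ((N.factorial : ℝ) * (N.factorial : ℝ)) := by
    rw [hform]
    have h1 : ∑ k ∈ range (2 * N - 2 + 1), ((2 * N - 2).choose k : ℝ) *
        (a (k + 1) * a (2 * N - 2 - k + 1)) =
        ((2 * N - 2).choose (N - 1) : ℝ) * ((N.factorial : ℝ) * (N.factorial : ℝ)) := by
      rw [Finset.sum_eq_single (N - 1)]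
      · have e1 : N - 1 + 1 = N := by omega
        have e2 : 2 * N - 2 - (N - 1) + 1 = N := by omega
        rw [e1, e2, haN]
      · intro k hk hne'
        have hk' : k ≤ 2 * N - 2 := by simpa [Nat.lt_succ_iff] using hk
        rcases lt_or_ge (k + 1) N with hlt | hge
        · rw [haz _ hlt]; ring
        · rw [haz (2 * N - 2 - k + 1) (by omega)]; ring
      · intro hmem
        exact absurd (Finset.mem_range.mpr (by omega)) hmem
    have h2 : ∑ k ∈ range (2 * N - 2 + 1), ((2 * N - 2).choose k : ℝ) *
        (a k * a (2 * N - 2 - k + 2)) =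
        ((2 * N - 2).choose N : ℝ) * ((N.factorial : ℝ) * (N.factorial : ℝ)) := by
      rw [Finset.sum_eq_single N]
      · have e2 : 2 * N - 2 - N + 2 = N := by omega
        rw [e2, haN]
      · intro k hk hne'
        have hk' : k ≤ 2 * N - 2 := by simpa [Nat.lt_succ_iff] using hk
        rcases lt_or_ge k N with hlt | hge
        · rw [haz _ hlt]; ring
        · rw [haz (2 * N - 2 - k + 2) (by omega)]; ring
      · intro hmem
        exact absurd (Finset.mem_range.mpr (by omega)) hmem
    rw [h1, h2]; ring
  -- the leading coefficient is nonzero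
  have hchoose : (2 * N - 2).choose N < (2 * N - 2).choose (N - 1) := by
    have hid : (2 * N - 2).choose N * N = (2 * N - 2).choose (N - 1) * (N - 1) := by
      have := Nat.choose_succ_right_eq (2 * N - 2) (N - 1)
      rwa [show N - 1 + 1 = N by omega, show 2 * N - 2 - (N - 1) = N - 1 by omega] at this
    have hpos : 0 < (2 * N - 2).choose (N - 1) := Nat.choose_pos (by omega)
    have h3 : (2 * N - 2).choose (N - 1) * (N - 1) < (2 * N - 2).choose (N - 1) * N :=
      mul_lt_mul_of_pos_left (by omega) hpos
    have h4 : (2 * N - 2).choose N * N < (2 * N - 2).choose (N - 1) * N := by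
      rw [hid]; exact h3
    exact lt_of_mul_lt_mul_right h4 (Nat.zero_le N)
  have hne' : iteratedDeriv (2 * N - 2) h 0 ≠ 0 := by
    rw [hval]
    have h1 : ((2 * N - 2).choose N : ℝ) < ((2 * N - 2).choose (N - 1) : ℝ) := by
      exact_mod_cast hchoose
    have h2 : (0 : ℝ) < (N.factorial : ℝ) * (N.factorial : ℝ) := by positivity
    have : (0 : ℝ) < (((2 * N - 2).choose (N - 1) : ℝ) - ((2 * N - 2).choose N : ℝ)) *
        ((N.factorial : ℝ) * (N.factorial : ℝ)) := by
      apply mul_pos (by linarith) h2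
    linarith
  exact hmax h hhG (2 * N - 2) (by omega) ⟨hvan, hne'⟩
end

section
/- Any finite-dimensional Lie subalgebra of the Lie algebra of smooth vector fields on ℝ that contains ∂/∂x has dimension at most 3. -/
open Set

namespace Stmt4Aux

lemma itd_add {f g : ℝ → ℝ} (hf : ContDiff ℝ (⊤ : ℕ∞) f) (hg : ContDiff ℝ (⊤ : ℕ∞) g) (n : ℕ) (x : ℝ) :
    iteratedDeriv n (f + g) x = iteratedDeriv n f x + iteratedDeriv n g x := by
  simp only [← iteratedDerivWithin_univ]
  exact iteratedDerivWithin_add (Set.mem_univ x) uniqueDiffOn_univ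
    ((hf.of_le (by exact_mod_cast le_top)).contDiffWithinAt) ((hg.of_le (by exact_mod_cast le_top)).contDiffWithinAt)

lemma itd_sub {f g : ℝ → ℝ} (hf : ContDiff ℝ (⊤ : ℕ∞) f) (hg : ContDiff ℝ (⊤ : ℕ∞) g) (n : ℕ) (x : ℝ) :
    iteratedDeriv n (f - g) x = iteratedDeriv n f x - iteratedDeriv n g x := by
  simp only [← iteratedDerivWithin_univ]
  exact iteratedDerivWithin_sub (Set.mem_univ x) uniqueDiffOn_univ
    ((hf.of_le (by exact_mod_cast le_top)).contDiffWithinAt) ((hg.of_le (by exact_mod_cast le_top)).contDiffWithinAt)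

lemma itd_smul {f : ℝ → ℝ} (hf : ContDiff ℝ (⊤ : ℕ∞) f) (c : ℝ) (n : ℕ) (x : ℝ) :
    iteratedDeriv n (c • f) x = c * iteratedDeriv n f x := by
  simp only [← iteratedDerivWithin_univ]
  rw [iteratedDerivWithin_const_smul (Set.mem_univ x) uniqueDiffOn_univ c
    ((hf.of_le (by exact_mod_cast le_top)).contDiffWithinAt)]
  simp

lemma deriv_mul_fun {f g : ℝ → ℝ} (hf : ContDiff ℝ (⊤ : ℕ∞) f) (hg : ContDiff ℝ (⊤ : ℕ∞) g) :
    deriv (fun x => f x * g x) = fun x => deriv f x * g x + f x * deriv g x := by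
  funext x
  exact deriv_fun_mul ((hf.differentiable (by simp)).differentiableAt)
    ((hg.differentiable (by simp)).differentiableAt)

section G

variable {G : Submodule ℝ (ℝ → ℝ)}
  (hsm : ∀ f ∈ G, ContDiff ℝ (⊤ : ℕ∞) f)
  (hcl : ∀ f₁ ∈ G, ∀ f₂ ∈ G, vfBracket f₁ f₂ ∈ G)
  (h1 : (fun _ => (1 : ℝ)) ∈ G)

include hcl h1 in
lemma derivG {f : ℝ → ℝ} (hf : f ∈ G) : deriv f ∈ G := by
  have h := hcl _ h1 _ hf
  have : vfBracket (fun _ => (1 : ℝ)) f = deriv f := by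
    funext x
    simp [vfBracket]
  rwa [this] at h

include hsm hcl h1 in
/-- vanishing of low-order derivatives of a product. -/
lemma mul_vanish : ∀ (k : ℕ), ∀ (a b : ℕ) (f g : ℝ → ℝ), f ∈ G → g ∈ G →
    (∀ i < a, iteratedDeriv i f 0 = 0) → (∀ j < b, iteratedDeriv j g 0 = 0) →
    k < a + b → iteratedDeriv k (fun x => f x * g x) 0 = 0 := by
  intro k
  induction k with
  | zero =>
    intro a b f g hf hg hfa hgb hk
    simp only [iteratedDeriv_zero]
    rcases (by omega : 0 < a ∨ 0 < b) with h | h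
    · have := hfa 0 h
      simp only [iteratedDeriv_zero] at this
      rw [this, zero_mul]
    · have := hgb 0 h
      simp only [iteratedDeriv_zero] at this
      rw [this, mul_zero]
  | succ k ih =>
    intro a b f g hf hg hfa hgb hk
    rw [iteratedDeriv_succ', deriv_mul_fun (hsm f hf) (hsm g hg)]
    have hsum : (fun x => deriv f x * g x + f x * deriv g x)
        = (fun x => deriv f x * g x) + (fun x => f x * deriv g x) := rfl
    rw [hsum, itd_add (((hsm _ (derivG hcl h1 hf))).mul (hsm g hg))
      ((hsm f hf).mul (hsm _ (derivG hcl h1 hg)))]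
    have t1 : iteratedDeriv k (fun x => deriv f x * g x) 0 = 0 := by
      refine ih (a - 1) b (deriv f) g (derivG hcl h1 hf) hg ?_ hgb (by omega)
      intro i hi
      have : iteratedDeriv (i + 1) f 0 = 0 := hfa (i + 1) (by omega)
      rwa [iteratedDeriv_succ'] at this
    have t2 : iteratedDeriv k (fun x => f x * deriv g x) 0 = 0 := by
      refine ih a (b - 1) f (deriv g) hf (derivG hcl h1 hg) hfa ?_ (by omega)
      intro j hj
      have : iteratedDeriv (j + 1) g 0 = 0 := hgb (j + 1) (by omega)
      rwa [iteratedDeriv_succ'] at this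
    rw [t1, t2, add_zero]

include hsm hcl h1 in
/-- the leading derivative of a product at 0. -/
lemma mul_exact : ∀ (n : ℕ), ∀ (a b : ℕ), a + b = n → ∀ (f g : ℝ → ℝ), f ∈ G → g ∈ G →
    (∀ i < a, iteratedDeriv i f 0 = 0) → (∀ j < b, iteratedDeriv j g 0 = 0) →
    iteratedDeriv n (fun x => f x * g x) 0
      = (n.choose a : ℝ) * iteratedDeriv a f 0 * iteratedDeriv b g 0 := by
  intro n
  induction n using Nat.strong_induction_on with
  | _ n ih =>
    intro a b hab f g hf hg hfa hgb
    match n, hab with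
    | 0, hab =>
      obtain ⟨rfl, rfl⟩ : a = 0 ∧ b = 0 := by omega
      simp [iteratedDeriv_zero]
    | (m+1), hab =>
      rw [iteratedDeriv_succ', deriv_mul_fun (hsm f hf) (hsm g hg)]
      have hsum : (fun x => deriv f x * g x + f x * deriv g x)
          = (fun x => deriv f x * g x) + (fun x => f x * deriv g x) := rfl
      rw [hsum, itd_add (((hsm _ (derivG hcl h1 hf))).mul (hsm g hg))
        ((hsm f hf).mul (hsm _ (derivG hcl h1 hg)))]
      have hdf : ∀ i < a - 1, iteratedDeriv i (deriv f) 0 = 0 := by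
        intro i hi
        have : iteratedDeriv (i + 1) f 0 = 0 := hfa (i + 1) (by omega)
        rwa [iteratedDeriv_succ'] at this
      have hdg : ∀ j < b - 1, iteratedDeriv j (deriv g) 0 = 0 := by
        intro j hj
        have : iteratedDeriv (j + 1) g 0 = 0 := hgb (j + 1) (by omega)
        rwa [iteratedDeriv_succ'] at this
      match a, hab with
      | 0, hab =>
        -- b = m + 1
        have hb : b = m + 1 := by omega
        have t1 : iteratedDeriv m (fun x => deriv f x * g x) 0 = 0 := by
          refine mul_vanish hsm hcl h1 m 0 b (deriv f) g (derivG hcl h1 hf) hg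
            (by intro i hi; omega) hgb (by omega)
        have t2 : iteratedDeriv m (fun x => f x * deriv g x) 0
            = (m.choose 0 : ℝ) * iteratedDeriv 0 f 0 * iteratedDeriv (b-1) (deriv g) 0 := by
          refine ih m (by omega) 0 (b-1) (by omega) f (deriv g) hf (derivG hcl h1 hg)
            (by intro i hi; omega) hdg
        rw [t1, t2, zero_add]
        have : iteratedDeriv (b-1) (deriv g) 0 = iteratedDeriv (m+1) g 0 := by
          rw [← iteratedDeriv_succ']
          congr 1
          omega
        rw [this, hb]
        simp
      | (a'+1), hab =>
        have t1 : iteratedDeriv m (fun x => deriv f x * g x) 0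
            = (m.choose a' : ℝ) * iteratedDeriv a' (deriv f) 0 * iteratedDeriv b g 0 := by
          refine ih m (by omega) a' b (by omega) (deriv f) g (derivG hcl h1 hf) hg
            (by simpa using hdf) hgb
        have ha' : iteratedDeriv a' (deriv f) 0 = iteratedDeriv (a'+1) f 0 := by
          rw [← iteratedDeriv_succ']
        have t2 : iteratedDeriv m (fun x => f x * deriv g x) 0
            = (m.choose (a'+1) : ℝ) * iteratedDeriv (a'+1) f 0 * iteratedDeriv b g 0 := by
          match b, hab with
          | 0, hab =>
            have hz : iteratedDeriv m (fun x => f x * deriv g x) 0 = 0 :=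
              mul_vanish hsm hcl h1 m (a'+1) 0 f (deriv g) hf (derivG hcl h1 hg)
                hfa (by intro j hj; omega) (by omega)
            have hcz : (m.choose (a'+1)) = 0 := Nat.choose_eq_zero_of_lt (by omega)
            rw [hz, hcz]
            simp
          | (b'+1), hab =>
            have := ih m (by omega) (a'+1) b' (by omega) f (deriv g) hf (derivG hcl h1 hg)
              hfa hdg
            rw [this]
            have : iteratedDeriv b' (deriv g) 0 = iteratedDeriv (b'+1) g 0 := by
              rw [← iteratedDeriv_succ']
            rw [this]
        rw [t1, t2, ha']
        have hpascal : ((m+1).choose (a'+1) : ℝ) = (m.choose a' : ℝ) + (m.choose (a'+1) : ℝ) := by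
          rw [Nat.choose_succ_succ]
          push_cast
          ring
        rw [hpascal]
        ring

include hsm hcl h1 in
lemma bracket_vanish {a b : ℕ} {f g : ℝ → ℝ} (hf : f ∈ G) (hg : g ∈ G)
    (hfa : ∀ i < a, iteratedDeriv i f 0 = 0) (hgb : ∀ j < b, iteratedDeriv j g 0 = 0)
    (hab : a < b) :
    ∀ k < a + b - 1, iteratedDeriv k (vfBracket f g) 0 = 0 := by
  intro k hk
  have hbr : vfBracket f g = (fun x => f x * deriv g x) - (fun x => g x * deriv f x) := rfl
  rw [hbr, itd_sub ((hsm f hf).mul (hsm _ (derivG hcl h1 hg)))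
    ((hsm g hg).mul (hsm _ (derivG hcl h1 hf)))]
  have hdg : ∀ j < b - 1, iteratedDeriv j (deriv g) 0 = 0 := by
    intro j hj
    have : iteratedDeriv (j + 1) g 0 = 0 := hgb (j + 1) (by omega)
    rwa [iteratedDeriv_succ'] at this
  have hdf : ∀ i < a - 1, iteratedDeriv i (deriv f) 0 = 0 := by
    intro i hi
    have : iteratedDeriv (i + 1) f 0 = 0 := hfa (i + 1) (by omega)
    rwa [iteratedDeriv_succ'] at this
  have t1 : iteratedDeriv k (fun x => f x * deriv g x) 0 = 0 :=
    mul_vanish hsm hcl h1 k a (b-1) f (deriv g) hf (derivG hcl h1 hg) hfa hdg (by omega)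
  have t2 : iteratedDeriv k (fun x => g x * deriv f x) 0 = 0 :=
    mul_vanish hsm hcl h1 k b (a-1) g (deriv f) hg (derivG hcl h1 hf) hgb hdf (by omega)
  rw [t1, t2, sub_zero]

include hsm hcl h1 in
lemma bracket_exact {a b : ℕ} {f g : ℝ → ℝ} (hf : f ∈ G) (hg : g ∈ G)
    (hfa : ∀ i < a, iteratedDeriv i f 0 = 0) (hgb : ∀ j < b, iteratedDeriv j g 0 = 0)
    (hab : a < b) :
    iteratedDeriv (a + b - 1) (vfBracket f g) 0
      = (((a+b-1).choose a : ℝ) - ((a+b-1).choose b : ℝ))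
        * (iteratedDeriv a f 0 * iteratedDeriv b g 0) := by
  have hbr : vfBracket f g = (fun x => f x * deriv g x) - (fun x => g x * deriv f x) := rfl
  rw [hbr, itd_sub ((hsm f hf).mul (hsm _ (derivG hcl h1 hg)))
    ((hsm g hg).mul (hsm _ (derivG hcl h1 hf)))]
  have hdg : ∀ j < b - 1, iteratedDeriv j (deriv g) 0 = 0 := by
    intro j hj
    have : iteratedDeriv (j + 1) g 0 = 0 := hgb (j + 1) (by omega)
    rwa [iteratedDeriv_succ'] at this
  have hdf : ∀ i < a - 1, iteratedDeriv i (deriv f) 0 = 0 := by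
    intro i hi
    have : iteratedDeriv (i + 1) f 0 = 0 := hfa (i + 1) (by omega)
    rwa [iteratedDeriv_succ'] at this
  have t1 : iteratedDeriv (a+b-1) (fun x => f x * deriv g x) 0
      = ((a+b-1).choose a : ℝ) * iteratedDeriv a f 0 * iteratedDeriv b g 0 := by
    have := mul_exact hsm hcl h1 (a+b-1) a (b-1) (by omega) f (deriv g) hf
      (derivG hcl h1 hg) hfa hdg
    rw [this]
    have : iteratedDeriv (b-1) (deriv g) 0 = iteratedDeriv b g 0 := by
      rw [← iteratedDeriv_succ']
      congr 1
      omega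
    rw [this]
  have t2 : iteratedDeriv (a+b-1) (fun x => g x * deriv f x) 0
      = ((a+b-1).choose b : ℝ) * iteratedDeriv a f 0 * iteratedDeriv b g 0 := by
    rcases Nat.eq_zero_or_pos a with rfl | hap
    · have hz : iteratedDeriv (0+b-1) (fun x => g x * deriv f x) 0 = 0 :=
        mul_vanish hsm hcl h1 (0+b-1) b 0 g (deriv f) hg (derivG hcl h1 hf) hgb
          (by intro j hj; omega) (by omega)
      rw [hz]
      have : ((0+b-1).choose b) = 0 := Nat.choose_eq_zero_of_lt (by omega)
      rw [this]
      simp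
    · have := mul_exact hsm hcl h1 (a+b-1) b (a-1) (by omega) g (deriv f) hg
        (derivG hcl h1 hf) hgb hdf
      rw [this]
      have : iteratedDeriv (a-1) (deriv f) 0 = iteratedDeriv a f 0 := by
        rw [← iteratedDeriv_succ']
        congr 1
        omega
      rw [this]
      ring
  rw [t1, t2]
  ring

end G

lemma choose_ne_choose {a b : ℕ} (h : a < b) : (a+b-1).choose a ≠ (a+b-1).choose b := by
  rcases a with _ | a'
  · have h1 : (0+b-1).choose 0 = 1 := Nat.choose_zero_right _
    have h2 : (0+b-1).choose b = 0 := Nat.choose_eq_zero_of_lt (by omega)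
    omega
  · set a := a' + 1 with ha
    set m := a + b - 1 with hm
    have hmb : m - b = a' := by omega
    have hsymm : m.choose b = m.choose a' := by
      rw [← hmb]
      exact (Nat.choose_symm (by omega)).symm
    intro heq
    rw [hsymm] at heq
    have hrec : m.choose (a'+1) * (a'+1) = m.choose a' * (m - a') := Nat.choose_succ_right_eq m a'
    rw [← heq] at hrec
    have hpos : 0 < m.choose (a'+1) := Nat.choose_pos (by omega)
    have : a' + 1 = m - a' := Nat.eq_of_mul_eq_mul_left hpos hrec
    omega

def ExactOrd (G : Submodule ℝ (ℝ → ℝ)) (m : ℕ) : Prop :=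
  ∃ f, f ∈ G ∧ (∀ k < m, iteratedDeriv k f 0 = 0) ∧ iteratedDeriv m f 0 ≠ 0

section G2

variable {G : Submodule ℝ (ℝ → ℝ)}
  (hsm : ∀ f ∈ G, ContDiff ℝ (⊤ : ℕ∞) f)
  (hcl : ∀ f₁ ∈ G, ∀ f₂ ∈ G, vfBracket f₁ f₂ ∈ G)
  (h1 : (fun _ => (1 : ℝ)) ∈ G)

include hcl h1 in
lemma ord_down {m : ℕ} (h : ExactOrd G (m+1)) : ExactOrd G m := by
  obtain ⟨f, hf, hlow, htop⟩ := h
  refine ⟨deriv f, derivG hcl h1 hf, ?_, ?_⟩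
  · intro k hk
    have := hlow (k+1) (by omega)
    rwa [iteratedDeriv_succ'] at this
  · rwa [iteratedDeriv_succ'] at htop

include hcl h1 in
lemma ord_down_iter (m : ℕ) : ∀ j, ExactOrd G (m+j) → ExactOrd G m := by
  intro j
  induction j with
  | zero => exact id
  | succ j ih => intro h; exact ih (ord_down hcl h1 h)

include hsm hcl h1 in
lemma ord_up {m : ℕ} (hm : 3 ≤ m) (h : ExactOrd G m) : ExactOrd G (m+1) := by
  obtain ⟨f, hf, hlow, htop⟩ := h
  set g := deriv f with hg
  have hgG : g ∈ G := derivG hcl h1 hf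
  have hglow : ∀ k < m - 1, iteratedDeriv k g 0 = 0 := by
    intro k hk
    have := hlow (k+1) (by omega)
    rwa [iteratedDeriv_succ'] at this
  have hgtop : iteratedDeriv (m-1) g 0 = iteratedDeriv m f 0 := by
    rw [hg, ← iteratedDeriv_succ']
    congr 1
    omega
  have hab : m - 1 < m := by omega
  have hbig : ExactOrd G ((m-1) + m - 1) := by
    refine ⟨vfBracket g f, hcl _ hgG _ hf, ?_, ?_⟩
    · exact bracket_vanish hsm hcl h1 hgG hf hglow hlow hab
    · rw [bracket_exact hsm hcl h1 hgG hf hglow hlow hab]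
      have hcc : (((m-1)+m-1).choose (m-1) : ℝ) - (((m-1)+m-1).choose m : ℝ) ≠ 0 := by
        have := choose_ne_choose hab
        intro hzz
        apply this
        have := sub_eq_zero.mp hzz
        exact_mod_cast this
      rw [hgtop]
      exact mul_ne_zero hcc (mul_ne_zero htop htop)
  have heq : (m-1) + m - 1 = (m+1) + (m-3) := by omega
  rw [heq] at hbig
  exact ord_down_iter hcl h1 (m+1) (m-3) hbig

include hsm hcl h1 in
lemma ord_all {a : ℕ} (ha : 3 ≤ a) (h : ExactOrd G a) : ∀ j, ExactOrd G (a+j) := by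
  intro j
  induction j with
  | zero => exact h
  | succ j ih => exact ord_up hsm hcl h1 (le_trans ha (Nat.le_add_right a j)) ih

/-- evaluation of the k-th derivative at 0, as a linear map on G -/
noncomputable def evalD (hsm : ∀ f ∈ G, ContDiff ℝ (⊤ : ℕ∞) f) (k : ℕ) : G →ₗ[ℝ] ℝ where
  toFun f := iteratedDeriv k (f : ℝ → ℝ) 0
  map_add' f g := by
    have h : ((f + g : G) : ℝ → ℝ) = (f : ℝ → ℝ) + (g : ℝ → ℝ) := rfl
    rw [h, itd_add (hsm _ f.2) (hsm _ g.2)]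
  map_smul' c f := by
    have h : ((c • f : G) : ℝ → ℝ) = c • (f : ℝ → ℝ) := rfl
    rw [h, itd_smul (hsm _ f.2) c]
    simp

include hsm hcl h1 in
/-- A flat function in `G` is zero (via uniqueness for a linear ODE). -/
lemma flat_eq_zero [FiniteDimensional ℝ G] {f : ℝ → ℝ} (hfG : f ∈ G)
    (h : ∀ n, iteratedDeriv n f 0 = 0) : f = 0 := by
  set W : Submodule ℝ G := ⨅ n, LinearMap.ker (evalD hsm n) with hW
  have memW : ∀ g : G, g ∈ W ↔ ∀ n, iteratedDeriv n (g : ℝ → ℝ) 0 = 0 := by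
    intro g
    simp only [hW, Submodule.mem_iInf, LinearMap.mem_ker]
    rfl
  have dW : ∀ g : W, (⟨deriv ((g : G) : ℝ → ℝ), derivG hcl h1 (g : G).2⟩ : G) ∈ W := by
    intro g
    rw [memW]
    intro n
    have := (memW g).mp g.2 (n+1)
    rwa [iteratedDeriv_succ'] at this
  haveI : Module.Free ℝ W := Module.Free.of_divisionRing ℝ W
  set b := Module.finBasis ℝ W with hb
  set A : Matrix (Fin (Module.finrank ℝ W)) (Fin (Module.finrank ℝ W)) ℝ :=
    fun i j => b.repr ⟨_, dW (b i)⟩ j with hA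
  have hderiv : ∀ i y, deriv (((b i : W) : G) : ℝ → ℝ) y
      = ∑ j, A i j * (((b j : W) : G) : ℝ → ℝ) y := by
    intro i y
    have hs := congrArg (fun w : W => (((w : G) : ℝ → ℝ)) y) (b.sum_repr ⟨_, dW (b i)⟩)
    simp only [Submodule.coe_sum, Submodule.coe_smul, Finset.sum_apply, Pi.smul_apply,
      smul_eq_mul] at hs
    rw [← hs]
  set Φ : ℝ → (Fin (Module.finrank ℝ W) → ℝ) := fun y i => (((b i : W) : G) : ℝ → ℝ) y with hΦ
  set L := LinearMap.toContinuousLinearMap (Matrix.mulVecLin A) with hL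
  have hΦd : ∀ y, HasDerivAt Φ (L (Φ y)) y := by
    intro y
    rw [hasDerivAt_pi]
    intro i
    have hd := (((hsm _ (b i : W).1.2).differentiable (by simp)) y).hasDerivAt
    rw [hderiv i y] at hd
    convert hd using 1
    simp [hL, hΦ, Matrix.mulVec, dotProduct]
  have hz := ODE_solution_unique_univ (v := fun _ => L) (s := fun _ => Set.univ) (t₀ := 0)
    (g := fun _ => (0 : Fin (Module.finrank ℝ W) → ℝ))
    (fun _ => L.lipschitz.lipschitzOnWith) (fun t => ⟨hΦd t, trivial⟩)
    (fun t => ⟨by simpa using (hasDerivAt_const t (0 : Fin (Module.finrank ℝ W) → ℝ)), trivial⟩)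
    (by
      funext i
      have := (memW _).mp (b i).2 0
      simpa [hΦ] using this)
  have hbi : ∀ i, (((b i : W) : G) : ℝ → ℝ) = 0 := fun i => funext fun y => congrFun (congrFun hz y) i
  set w : W := ⟨⟨f, hfG⟩, (memW _).mpr h⟩ with hw
  have hs := congrArg (fun w : W => (((w : G) : ℝ → ℝ))) (b.sum_repr w)
  simp only [Submodule.coe_sum, Submodule.coe_smul, hbi, smul_zero, Finset.sum_const_zero] at hs
  exact hs.symm

end G2

end Stmt4Aux

/-- A finite-dimensional Lie algebra of smooth vector fields on `ℝ` containing `∂/∂x`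
has dimension at most `3`. -/
theorem stmt4 (G : Submodule ℝ (ℝ → ℝ)) [FiniteDimensional ℝ G]
    (hsmooth : ∀ f ∈ G, ContDiff ℝ (⊤ : ℕ∞) f)
    (hclosed : ∀ f₁ ∈ G, ∀ f₂ ∈ G, vfBracket f₁ f₂ ∈ G)
    (hone : (fun _ => (1 : ℝ)) ∈ G) :
    Module.finrank ℝ G ≤ 3 := by
  open Stmt4Aux in
  by_contra hc
  push_neg at hc
  -- the 3-jet map
  set J : G →ₗ[ℝ] (Fin 3 → ℝ) := LinearMap.pi (fun k : Fin 3 => evalD hsmooth (k : ℕ)) with hJ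
  have hnotinj : ¬ Function.Injective J := by
    intro hinj
    have := LinearMap.finrank_le_finrank_of_injective hinj
    rw [Module.finrank_fin_fun] at this
    omega
  have hker : LinearMap.ker J ≠ ⊥ := fun h => hnotinj (LinearMap.ker_eq_bot.mp h)
  obtain ⟨x, hxk, hx0⟩ := (Submodule.ne_bot_iff _).mp hker
  have hJx0 : J x = 0 := LinearMap.mem_ker.mp hxk
  set f : ℝ → ℝ := (x : ℝ → ℝ) with hfdef
  have hfG : f ∈ G := x.2
  have hfne : f ≠ 0 := by
    intro h
    apply hx0
    apply Subtype.ext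
    exact h
  have h3 : ∀ k < 3, iteratedDeriv k f 0 = 0 := by
    intro k hk
    have : iteratedDeriv k f 0 = (J x) ⟨k, hk⟩ := rfl
    rw [this, hJx0]
    rfl
  have hex : ∃ m, iteratedDeriv m f 0 ≠ 0 := by
    by_contra h
    push_neg at h
    exact hfne (flat_eq_zero hsmooth hclosed hone hfG h)
  set a := Nat.find hex with hadef
  have hatop : iteratedDeriv a f 0 ≠ 0 := Nat.find_spec hex
  have halow : ∀ k < a, iteratedDeriv k f 0 = 0 := fun k hk => of_not_not (Nat.find_min hex hk)
  have ha3 : 3 ≤ a := by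
    by_contra h
    exact hatop (h3 a (by omega))
  have hall : ∀ j, ExactOrd G (a + j) :=
    ord_all hsmooth hclosed hone ha3 ⟨f, hfG, halow, hatop⟩
  set n := Module.finrank ℝ G with hn
  have hall' : ∀ i : Fin (n+1), ∃ g, g ∈ G ∧ (∀ k < a + (i : ℕ), iteratedDeriv k g 0 = 0) ∧
      iteratedDeriv (a + (i : ℕ)) g 0 ≠ 0 := fun i => hall i.1
  choose w hwG hwlow hwtop using hall'
  set v : Fin (n+1) → G := fun i => ⟨w i, hwG i⟩ with hv
  have hli : LinearIndependent ℝ v := by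
    rw [Fintype.linearIndependent_iff]
    intro c hc0
    have key : ∀ m : ℕ, ∀ i : Fin (n+1), (i : ℕ) = m → c i = 0 := by
      intro m
      induction m using Nat.strong_induction_on with
      | _ m ih =>
        intro i him
        have happ := congrArg (evalD hsmooth (a + m)) hc0
        rw [map_sum, map_zero] at happ
        have hterm : ∀ j : Fin (n+1),
            evalD hsmooth (a+m) (c j • v j) = c j * iteratedDeriv (a+m) (w j) 0 := by
          intro j
          rw [map_smul]
          rfl
        rw [Finset.sum_congr rfl (fun j _ => hterm j)] at happ
        have hsingle : ∑ j, c j * iteratedDeriv (a+m) (w j) 0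
            = c i * iteratedDeriv (a+m) (w i) 0 := by
          apply Finset.sum_eq_single
          · intro j _ hji
            rcases lt_trichotomy (j : ℕ) m with h | h | h
            · rw [ih (j : ℕ) h j rfl, zero_mul]
            · exact absurd (Fin.val_injective (h.trans him.symm)) hji
            · rw [hwlow j (a+m) (by omega), mul_zero]
          · intro hni
            exact absurd (Finset.mem_univ i) hni
        rw [hsingle] at happ
        have hne : iteratedDeriv (a+m) (w i) 0 ≠ 0 := by
          rw [← him]
          exact hwtop i
        exact (mul_eq_zero.mp happ).resolve_right hne
    exact fun i => key i.1 i rfl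
  have hcard := hli.fintype_card_le_finrank
  rw [Fintype.card_fin] at hcard
  omega
end

section
/- Lie's theorem in one dimension: if 𝔤 is a finite-dimensional Lie subalgebra of smooth vector fields on ℝ containing ∂/∂x, then 𝔤 equals one of: span{∂/∂x}; span{∂/∂x, e^{λx}∂/∂x} for some λ ≠ 0; span{∂/∂x, x∂/∂x}; span{∂/∂x, sin(λx)∂/∂x, cos(λx)∂/∂x} for some λ ≠ 0; span{∂/∂x, x∂/∂x, x²∂/∂x}; span{∂/∂x, sinh(λx)∂/∂x, cosh(λx)∂/∂x} for some λ ≠ 0. -/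
open Finset Module Submodule Polynomial

-- ==== from s1.lean ====


theorem smooth_deriv {f : ℝ → ℝ} (hf : ContDiff ℝ (⊤:ℕ∞) f) : ContDiff ℝ (⊤:ℕ∞) (deriv f) :=
  (contDiff_infty_iff_deriv.mp hf).2

theorem smooth_iteratedDeriv {f : ℝ → ℝ} (hf : ContDiff ℝ (⊤:ℕ∞) f) (n : ℕ) :
    ContDiff ℝ (⊤:ℕ∞) (iteratedDeriv n f) := by
  induction n with
  | zero => simpa [iteratedDeriv_zero]
  | succ n ih => rw [iteratedDeriv_succ]; exact smooth_deriv ih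

theorem hasDerivAt_iteratedDeriv {f : ℝ → ℝ} (hf : ContDiff ℝ (⊤:ℕ∞) f) (n : ℕ) (x : ℝ) :
    HasDerivAt (iteratedDeriv n f) (iteratedDeriv (n+1) f x) x := by
  rw [iteratedDeriv_succ]
  exact (((smooth_iteratedDeriv hf n).differentiable (by simp)) x).hasDerivAt

theorem iteratedDeriv_mul' {f g : ℝ → ℝ} (hf : ContDiff ℝ (⊤:ℕ∞) f) (hg : ContDiff ℝ (⊤:ℕ∞) g)
    (n : ℕ) (x : ℝ) :
    iteratedDeriv n (fun x => f x * g x) x =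
      ∑ i ∈ range (n+1), (n.choose i : ℝ) * (iteratedDeriv i f x * iteratedDeriv (n - i) g x) := by
  induction n generalizing x with
  | zero => simp
  | succ n ih =>
    have hred : iteratedDeriv (n+1) (fun x => f x * g x) x
        = deriv (fun y => ∑ i ∈ range (n+1),
            (n.choose i : ℝ) * (iteratedDeriv i f y * iteratedDeriv (n - i) g y)) x := by
      rw [iteratedDeriv_succ]
      apply Filter.EventuallyEq.deriv_eq
      exact Filter.Eventually.of_forall fun y => ih y
    rw [hred, deriv_fun_sum (A := fun i y => (n.choose i : ℝ) * (iteratedDeriv i f y * iteratedDeriv (n - i) g y)) (fun i _ => (((hasDerivAt_iteratedDeriv hf i x).mul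
        (hasDerivAt_iteratedDeriv hg (n-i) x)).const_mul ((n.choose i : ℝ))).differentiableAt)]
    have hterm : ∀ i ∈ range (n+1),
        deriv (fun y => (n.choose i : ℝ) * (iteratedDeriv i f y * iteratedDeriv (n-i) g y)) x
        = (n.choose i : ℝ) * (iteratedDeriv (i+1) f x * iteratedDeriv (n+1-(i+1)) g x)
          + (n.choose i : ℝ) * (iteratedDeriv i f x * iteratedDeriv (n+1-i) g x) := by
      intro i hi
      have hile := Finset.mem_range.mp hi
      have hd := (((hasDerivAt_iteratedDeriv hf i x).mul
        (hasDerivAt_iteratedDeriv hg (n-i) x)).const_mul ((n.choose i : ℝ))).deriv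
      rw [show deriv (fun y => (n.choose i : ℝ) * (iteratedDeriv i f y * iteratedDeriv (n-i) g y)) x = _ from hd]
      have h1 : n + 1 - (i+1) = n - i := by omega
      have h2 : n - i + 1 = n + 1 - i := by omega
      rw [h1, h2]; ring
    rw [Finset.sum_congr rfl hterm, Finset.sum_add_distrib]
    -- abbreviate a j := iteratedDeriv j f x * iteratedDeriv (n+1-j) g x
    set a : ℕ → ℝ := fun j => iteratedDeriv j f x * iteratedDeriv (n+1-j) g x with ha
    have key : ∑ i ∈ range (n+1+1), ((n+1).choose i : ℝ) * a i
        = ∑ i ∈ range (n+1), (n.choose i : ℝ) * a (i+1)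
          + ∑ i ∈ range (n+1), (n.choose i : ℝ) * a i := by
      rw [Finset.sum_range_succ' (fun i => ((n+1).choose i : ℝ) * a i) (n+1)]
      have : ∀ k ∈ range (n+1), ((n+1).choose (k+1) : ℝ) * a (k+1)
          = (n.choose k : ℝ) * a (k+1) + (n.choose (k+1) : ℝ) * a (k+1) := by
        intro k _
        rw [Nat.choose_succ_succ n k]; push_cast; ring
      rw [Finset.sum_congr rfl this, Finset.sum_add_distrib]
      have h0 : (((n+1).choose 0 : ℝ)) * a 0 = (n.choose 0 : ℝ) * a 0 := by simp
      rw [h0]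
      have : ∑ i ∈ range (n+1), (n.choose i : ℝ) * a i
          = ∑ k ∈ range n, (n.choose (k+1) : ℝ) * a (k+1) + (n.choose 0 : ℝ) * a 0 := by
        rw [← Finset.sum_range_succ' (fun i => (n.choose i : ℝ) * a i) n]
      rw [this]
      have : ∑ k ∈ range (n+1), (n.choose (k+1) : ℝ) * a (k+1)
          = ∑ k ∈ range n, (n.choose (k+1) : ℝ) * a (k+1) := by
        rw [Finset.sum_range_succ]
        simp [Nat.choose_succ_self]
      rw [this]; ring
    rw [key]

-- ==== from s2.lean ====
theorem ode_unique (m : ℕ) (c : ℕ → ℝ) (f : ℝ → ℝ) (hf : ContDiff ℝ (⊤:ℕ∞) f)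
    (hode : ∀ x, iteratedDeriv m f x = ∑ i ∈ range m, c i * iteratedDeriv i f x)
    (h0 : ∀ i < m, iteratedDeriv i f 0 = 0) : f = 0 := by
  rcases Nat.eq_zero_or_pos m with hm | hm
  · subst hm; funext x; simpa using hode x
  set E := Fin m → ℝ
  set A : E →ₗ[ℝ] E := LinearMap.pi (fun i : Fin m =>
    if h : (i:ℕ)+1 < m then LinearMap.proj (⟨(i:ℕ)+1, h⟩ : Fin m)
    else ∑ j : Fin m, c j • LinearMap.proj j) with hA
  set T : E →L[ℝ] E := LinearMap.toContinuousLinearMap A with hT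
  set F : ℝ → E := fun t i => iteratedDeriv (i:ℕ) f t with hF
  have hTapp : ∀ y : E, ∀ i : Fin m, T y i =
      if h : (i:ℕ)+1 < m then y ⟨(i:ℕ)+1, h⟩ else ∑ j : Fin m, c j * y j := by
    intro y i
    show A y i = _
    rw [hA, LinearMap.pi_apply]
    split_ifs with h
    · rfl
    · rw [LinearMap.sum_apply]
      exact Finset.sum_congr rfl fun j _ => rfl
  have hF' : ∀ t, HasDerivAt F (T (F t)) t := by
    intro t
    rw [hasDerivAt_pi]
    intro i
    have hd := hasDerivAt_iteratedDeriv hf i t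
    rw [hTapp]
    split_ifs with h
    · exact hd
    · have him : (i:ℕ)+1 = m := by omega
      have : ∑ j : Fin m, c j * F t j = iteratedDeriv ((i:ℕ)+1) f t := by
        rw [him, hode t, ← Fin.sum_univ_eq_sum_range (fun j => c j * iteratedDeriv j f t) m]
      rw [this]
      exact hd
  have hFcont : Continuous F := by
    apply continuous_pi
    intro i
    exact ((smooth_iteratedDeriv hf i).differentiable (by simp)).continuous
  have hF0 : F 0 = 0 := by
    funext i
    exact h0 i i.isLt
  have hzero : ∀ (T' : E →L[ℝ] E) (G : ℝ → E), Continuous G → (∀ t, HasDerivAt G (T' (G t)) t) →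
      G 0 = 0 → ∀ b ≥ (0:ℝ), G b = 0 := by
    intro T' G hGc hG' hG0 b hb
    have := ODE_solution_unique (v := fun _ : ℝ => ⇑T') (K := ‖T'‖₊) (f := G)
      (g := fun _ => 0) (a := 0) (b := b)
      (fun _ => T'.lipschitz) hGc.continuousOn
      (fun t _ => (hG' t).hasDerivWithinAt) continuousOn_const
      (fun t _ => by simpa using (hasDerivWithinAt_const t _ (0:E)))
      hG0
    exact this (Set.right_mem_Icc.mpr hb)
  have hall : ∀ t : ℝ, F t = 0 := by
    intro t
    rcases le_or_gt 0 t with ht | ht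
    · exact hzero T F hFcont hF' hF0 t ht
    · have hrev : ∀ s, HasDerivAt (fun u => F (-u)) ((-T) ((fun u => F (-u)) s)) s := by
        intro s
        have h1 : HasDerivAt (fun u : ℝ => -u) (-1) s := (hasDerivAt_id s).neg
        have h2 := (hF' (-s)).scomp s h1
        simpa [Function.comp_def] using h2
      have := hzero (-T) (fun u => F (-u)) (hFcont.comp continuous_neg)
        hrev (by simpa using hF0) (-t) (by linarith)
      simpa using this
  funext t
  have := congrFun (hall t) ⟨0, hm⟩
  simp [hF] at this; exact this

-- ==== from t.lean ====
theorem finrank_span_pair_le {V : Type*} [AddCommGroup V] [Module ℝ V] (a b : V) :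
    finrank ℝ (span ℝ ({a, b} : Set V)) ≤ 2 := by
  classical
  refine le_trans (finrank_span_le_card _) ?_
  rw [Set.toFinset_insert, Set.toFinset_singleton]
  exact le_trans (Finset.card_insert_le _ _) (by simp)

theorem finrank_span_triple_le {V : Type*} [AddCommGroup V] [Module ℝ V] (a b c : V) :
    finrank ℝ (span ℝ ({a, b, c} : Set V)) ≤ 3 := by
  classical
  refine le_trans (finrank_span_le_card _) ?_
  rw [Set.toFinset_insert, Set.toFinset_insert, Set.toFinset_singleton]
  refine le_trans (Finset.card_insert_le _ _) ?_
  have := Finset.card_insert_le b ({c} : Finset V)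
  simp at this ⊢
  omega

theorem mem_span_triple {V : Type*} [AddCommGroup V] [Module ℝ V] {a b c z : V}
    (x y w : ℝ) (h : x • a + y • b + w • c = z) : z ∈ span ℝ ({a, b, c} : Set V) := by
  rw [← h]
  refine Submodule.add_mem _ (Submodule.add_mem _ ?_ ?_) ?_ <;>
    refine Submodule.smul_mem _ _ (Submodule.subset_span ?_) <;> simp

-- ==== from s3.lean ====

theorem deriv_mem (G : Submodule ℝ (ℝ → ℝ))
    (hclosed : ∀ f₁ ∈ G, ∀ f₂ ∈ G, vfBracket f₁ f₂ ∈ G)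
    (hone : (fun _ => (1 : ℝ)) ∈ G) {f : ℝ → ℝ} (hf : f ∈ G) : deriv f ∈ G := by
  have h := hclosed _ hone f hf
  have he : vfBracket (fun _ => (1:ℝ)) f = deriv f := by
    funext x; simp [vfBracket]
  rwa [he] at h

theorem exists_ode (G : Submodule ℝ (ℝ → ℝ)) [FiniteDimensional ℝ G]
    (hsmooth : ∀ f ∈ G, ContDiff ℝ (⊤:ℕ∞) f)
    (hclosed : ∀ f₁ ∈ G, ∀ f₂ ∈ G, vfBracket f₁ f₂ ∈ G)
    (hone : (fun _ => (1 : ℝ)) ∈ G) :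
    ∃ c : ℕ → ℝ, c 0 = 0 ∧ ∀ f ∈ G, ∀ x : ℝ,
      iteratedDeriv (finrank ℝ G) f x
        = ∑ i ∈ range (finrank ℝ G), c i * iteratedDeriv i f x := by
  have hdiff : ∀ f : G, Differentiable ℝ (f : ℝ → ℝ) :=
    fun f => (hsmooth f.1 f.2).differentiable (by simp)
  set D : Module.End ℝ G :=
    { toFun := fun f => ⟨deriv f.1, deriv_mem G hclosed hone f.2⟩
      map_add' := by
        intro f g
        apply Subtype.ext
        show deriv (f.1 + g.1) = deriv f.1 + deriv g.1
        funext x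
        exact deriv_add (hdiff f x) (hdiff g x)
      map_smul' := by
        intro a f
        apply Subtype.ext
        show deriv (a • f.1) = a • deriv f.1
        funext x
        exact deriv_const_smul (f := (f.1 : ℝ → ℝ)) (x := x) a (hdiff f x) } with hD
  have hpow : ∀ (k : ℕ) (f : G), ((D^k) f : ℝ → ℝ) = iteratedDeriv k f.1 := by
    intro k
    induction k with
    | zero => intro f; simp [iteratedDeriv_zero]
    | succ k ih =>
      intro f
      rw [pow_succ, Module.End.mul_apply]
      rw [ih (D f)]
      rw [iteratedDeriv_succ']
      rfl
  set p := D.charpoly with hp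
  have hdeg : p.natDegree = finrank ℝ G := D.charpoly_natDegree
  have hlead : p.coeff (finrank ℝ G) = 1 := by
    rw [← hdeg]; exact D.charpoly_monic.coeff_natDegree
  have hc0 : p.coeff 0 = 0 := by
    have : constantCoeff p = 0 := by
      rw [LinearMap.charpoly_constantCoeff_eq_zero_iff]
      refine ⟨⟨(fun _ => (1:ℝ)), hone⟩, ?_, ?_⟩
      · intro h
        have := congrFun (congrArg Subtype.val h) 0
        simpa using this
      · apply Subtype.ext
        show deriv (fun _ => (1:ℝ)) = 0
        funext x; simp
    simpa [constantCoeff_apply] using this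
  have haev : Polynomial.aeval D p = 0 := D.aeval_self_charpoly
  refine ⟨fun i => -(p.coeff i), by simp [hc0], ?_⟩
  intro f hf x
  have happ : (∑ i ∈ range (finrank ℝ G + 1), p.coeff i • (D^i)) ⟨f, hf⟩ = 0 := by
    rw [← hdeg, ← Polynomial.aeval_eq_sum_range, haev]; rfl
  have happ2 : (∑ i ∈ range (finrank ℝ G + 1), p.coeff i • iteratedDeriv i f) = (0 : ℝ → ℝ) := by
    rw [LinearMap.sum_apply] at happ
    have := congrArg Subtype.val happ
    rw [AddSubmonoidClass.coe_finset_sum] at this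
    simp only [LinearMap.smul_apply, Submodule.coe_smul, hpow] at this
    simpa using this
  have hx := congrFun happ2 x
  rw [Finset.sum_range_succ] at hx
  simp only [Finset.sum_apply, Pi.smul_apply, smul_eq_mul, Pi.add_apply, Pi.zero_apply, hlead,
    one_mul] at hx
  have : iteratedDeriv (finrank ℝ G) f x = -∑ i ∈ range (finrank ℝ G), p.coeff i * iteratedDeriv i f x := by
    linarith
  rw [this, ← Finset.sum_neg_distrib]
  exact Finset.sum_congr rfl fun i _ => by ring

-- ==== from s4.lean ====

theorem iteratedDeriv_zero_fun (k : ℕ) : iteratedDeriv k (0 : ℝ → ℝ) = 0 := by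
  induction k with
  | zero => simp [iteratedDeriv_zero]
  | succ k ih =>
    rw [iteratedDeriv_succ, ih]
    funext x
    rw [show (0:ℝ→ℝ) = (fun _ => (0:ℝ)) from rfl]
    simp

theorem iteratedDeriv_sub' {u v : ℝ → ℝ} (hu : ContDiff ℝ (⊤:ℕ∞) u) (hv : ContDiff ℝ (⊤:ℕ∞) v)
    (j : ℕ) : iteratedDeriv j (fun y => u y - v y) = fun x => iteratedDeriv j u x - iteratedDeriv j v x := by
  induction j with
  | zero => simp [iteratedDeriv_zero]
  | succ j ih =>
    rw [iteratedDeriv_succ, ih]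
    funext x
    rw [deriv_fun_sub (((smooth_iteratedDeriv hu j).differentiable (by simp)) x)
      (((smooth_iteratedDeriv hv j).differentiable (by simp)) x)]
    rw [← iteratedDeriv_succ, ← iteratedDeriv_succ]

theorem iteratedDeriv_add' {u v : ℝ → ℝ} (hu : ContDiff ℝ (⊤:ℕ∞) u) (hv : ContDiff ℝ (⊤:ℕ∞) v)
    (j : ℕ) : iteratedDeriv j (fun y => u y + v y) = fun x => iteratedDeriv j u x + iteratedDeriv j v x := by
  induction j with
  | zero => simp [iteratedDeriv_zero]
  | succ j ih =>
    rw [iteratedDeriv_succ, ih]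
    funext x
    rw [deriv_fun_add (((smooth_iteratedDeriv hu j).differentiable (by simp)) x)
      (((smooth_iteratedDeriv hv j).differentiable (by simp)) x)]
    rw [← iteratedDeriv_succ, ← iteratedDeriv_succ]

theorem iteratedDeriv_smul' {u : ℝ → ℝ} (hu : ContDiff ℝ (⊤:ℕ∞) u) (a : ℝ)
    (j : ℕ) : iteratedDeriv j (fun y => a * u y) = fun x => a * iteratedDeriv j u x := by
  induction j with
  | zero => simp [iteratedDeriv_zero]
  | succ j ih =>
    rw [iteratedDeriv_succ, ih]
    funext x
    rw [deriv_const_mul a (((smooth_iteratedDeriv hu j).differentiable (by simp)) x)]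
    rw [← iteratedDeriv_succ]

theorem iteratedDeriv_iteratedDeriv (a b : ℕ) (f : ℝ → ℝ) :
    iteratedDeriv a (iteratedDeriv b f) = iteratedDeriv (a + b) f := by
  simp only [iteratedDeriv_eq_iterate]
  exact (Function.iterate_add_apply deriv a b f).symm

theorem choose_lt {k : ℕ} (hk : 3 ≤ k) : (2*k-2).choose k < (2*k-2).choose (k-1) := by
  have h1 : (2*k-2).choose (k-1+1) * (k-1+1) = (2*k-2).choose (k-1) * (2*k-2 - (k-1)) :=
    Nat.choose_succ_right_eq _ _
  have hk1 : k - 1 + 1 = k := by omega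
  have hk2 : 2*k-2 - (k-1) = k - 1 := by omega
  rw [hk1, hk2] at h1
  have hpos : 0 < (2*k-2).choose (k-1) := Nat.choose_pos (by omega)
  nlinarith

theorem jet3 (G : Submodule ℝ (ℝ → ℝ)) [FiniteDimensional ℝ G]
    (hsmooth : ∀ f ∈ G, ContDiff ℝ (⊤:ℕ∞) f)
    (hclosed : ∀ f₁ ∈ G, ∀ f₂ ∈ G, vfBracket f₁ f₂ ∈ G)
    (hone : (fun _ => (1 : ℝ)) ∈ G) :
    ∀ f ∈ G, (∀ i < 3, iteratedDeriv i f 0 = 0) → f = 0 := by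
  classical
  obtain ⟨c, hc0, hode⟩ := exists_ode G hsmooth hclosed hone
  set n := finrank ℝ G with hn
  have huniq : ∀ f ∈ G, (∀ i < n, iteratedDeriv i f 0 = 0) → f = 0 := by
    intro f hf h0
    exact ode_unique n c f (hsmooth f hf) (hode f hf) h0
  intro f hf h30
  by_contra hfne
  set P : ℕ → Prop := fun k => ∃ g ∈ G,
    (∀ i < k, iteratedDeriv i g 0 = 0) ∧ iteratedDeriv k g 0 ≠ 0 ∧ 3 ≤ k with hP
  have hbdd : ∀ k, P k → k < n := by
    intro k ⟨g, hg, hlow, hne, _⟩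
    by_contra hkn
    push_neg at hkn
    have : g = 0 := huniq g hg (fun i hi => hlow i (lt_of_lt_of_le hi hkn))
    rw [this] at hne
    exact hne (by rw [iteratedDeriv_zero_fun]; rfl)
  have hPne : ∃ k, P k := by
    -- f is a witness for its first nonzero jet
    have hex : ∃ i, iteratedDeriv i f 0 ≠ 0 := by
      by_contra hall
      push_neg at hall
      exact hfne (huniq f hf (fun i _ => hall i))
    set k := Nat.find hex with hk
    refine ⟨k, f, hf, fun i hi => ?_, Nat.find_spec hex, ?_⟩
    · by_contra hne; exact (Nat.find_min hex hi) hne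
    · -- k ≥ 3 because first three jets vanish
      by_contra hlt
      push_neg at hlt
      exact (Nat.find_spec hex) (h30 k hlt)
  obtain ⟨k1, hk1⟩ := hPne
  obtain ⟨k, hkdef⟩ : ∃ k, k = Nat.findGreatest P n := ⟨_, rfl⟩
  have hPk : P k := hkdef ▸ Nat.findGreatest_spec (le_of_lt (hbdd k1 hk1)) hk1
  obtain ⟨g, hg, hlow, hne, hk3⟩ := hPk
  obtain ⟨m, hm⟩ : ∃ m, m = 2*k - 2 := ⟨_, rfl⟩
  have hgs : ContDiff ℝ (⊤:ℕ∞) g := hsmooth g hg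
  have hg1 : ContDiff ℝ (⊤:ℕ∞) (iteratedDeriv 1 g) := smooth_iteratedDeriv hgs 1
  have hg2 : ContDiff ℝ (⊤:ℕ∞) (iteratedDeriv 2 g) := smooth_iteratedDeriv hgs 2
  set h : ℝ → ℝ := vfBracket g (deriv g) with hh
  have hhG : h ∈ G := hclosed g hg (deriv g) (deriv_mem G hclosed hone hg)
  have hhexpr : h = fun y => g y * iteratedDeriv 2 g y
      - iteratedDeriv 1 g y * iteratedDeriv 1 g y := by
    funext y
    show g y * deriv (deriv g) y - deriv g y * deriv g y = _
    rw [show iteratedDeriv 2 g = deriv (deriv g) from by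
        rw [iteratedDeriv_succ, iteratedDeriv_one], iteratedDeriv_one]
  have hjet : ∀ j : ℕ, iteratedDeriv j h 0 =
      ∑ i ∈ range (j+1), (j.choose i : ℝ) * (iteratedDeriv i g 0 * iteratedDeriv (j - i + 2) g 0)
      - ∑ i ∈ range (j+1), (j.choose i : ℝ) * (iteratedDeriv (i+1) g 0 * iteratedDeriv (j - i + 1) g 0) := by
    intro j
    have hstep : iteratedDeriv j h 0
        = iteratedDeriv j (fun y => g y * iteratedDeriv 2 g y) 0
          - iteratedDeriv j (fun y => iteratedDeriv 1 g y * iteratedDeriv 1 g y) 0 := by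
      rw [hhexpr, iteratedDeriv_sub' (u := fun y => g y * iteratedDeriv 2 g y)
        (v := fun y => iteratedDeriv 1 g y * iteratedDeriv 1 g y) (hgs.mul hg2) (hg1.mul hg1) j]
    rw [hstep, iteratedDeriv_mul' hgs hg2 j 0, iteratedDeriv_mul' hg1 hg1 j 0]
    congr 1
    · refine Finset.sum_congr rfl fun i hi => ?_
      rw [iteratedDeriv_iteratedDeriv]
    · refine Finset.sum_congr rfl fun i hi => ?_
      rw [iteratedDeriv_iteratedDeriv, iteratedDeriv_iteratedDeriv]
  have hPm : P m := by
    refine ⟨h, hhG, ?_, ?_, by omega⟩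
    · intro j hj
      rw [hjet j]
      have z1 : ∀ i ∈ range (j+1),
          (j.choose i : ℝ) * (iteratedDeriv i g 0 * iteratedDeriv (j - i + 2) g 0) = 0 := by
        intro i hi
        rcases lt_or_ge i k with hik | hik
        · rw [hlow i hik]; ring
        · rw [hlow (j - i + 2) (by omega)]; ring
      have z2 : ∀ i ∈ range (j+1),
          (j.choose i : ℝ) * (iteratedDeriv (i+1) g 0 * iteratedDeriv (j - i + 1) g 0) = 0 := by
        intro i hi
        have hi' := Finset.mem_range.mp hi
        rcases lt_or_ge (i+1) k with hik | hik
        · rw [hlow (i+1) hik]; ring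
        · rw [hlow (j - i + 1) (by omega)]; ring
      rw [Finset.sum_congr rfl z1, Finset.sum_congr rfl z2]
      simp
    · rw [hjet m]
      have e1 : ∑ i ∈ range (m+1), (m.choose i : ℝ) * (iteratedDeriv i g 0 * iteratedDeriv (m - i + 2) g 0)
          = (m.choose k : ℝ) * (iteratedDeriv k g 0 * iteratedDeriv k g 0) := by
        rw [Finset.sum_eq_single k]
        · have hmk : m - k + 2 = k := by omega
          rw [hmk]
        · intro i hi hik
          rcases lt_or_ge i k with h' | h'
          · rw [hlow i h']; ring
          · have : i > k := lt_of_le_of_ne h' (Ne.symm hik)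
            rw [hlow (m - i + 2) (by omega)]; ring
        · intro hk'
          exfalso; apply hk'; rw [Finset.mem_range]; omega
      have e2 : ∑ i ∈ range (m+1), (m.choose i : ℝ) * (iteratedDeriv (i+1) g 0 * iteratedDeriv (m - i + 1) g 0)
          = (m.choose (k-1) : ℝ) * (iteratedDeriv k g 0 * iteratedDeriv k g 0) := by
        rw [Finset.sum_eq_single (k-1)]
        · have h1 : k - 1 + 1 = k := by omega
          have h2 : m - (k-1) + 1 = k := by omega
          rw [h1, h2]
        · intro i hi hik
          rcases lt_or_ge (i+1) k with h' | h'
          · rw [hlow (i+1) h']; ring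
          · have : i + 1 > k := by omega
            rw [hlow (m - i + 1) (by omega)]; ring
        · intro hk'
          exfalso; apply hk'; rw [Finset.mem_range]; omega
      rw [e1, e2, ← sub_mul]
      apply mul_ne_zero
      · intro hzero
        have h3 : m.choose k = m.choose (k-1) := Nat.cast_inj.mp (sub_eq_zero.mp hzero)
        rw [hm] at h3
        exact (ne_of_lt (choose_lt hk3)) h3
      · exact mul_ne_zero hne hne
  have hmn : m < n := hbdd m hPm
  have : m ≤ k := hkdef ▸ Nat.le_findGreatest (le_of_lt (hm ▸ hmn)) (hm ▸ hPm)
  omega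

theorem finrank_le_three (G : Submodule ℝ (ℝ → ℝ)) [FiniteDimensional ℝ G]
    (hsmooth : ∀ f ∈ G, ContDiff ℝ (⊤:ℕ∞) f)
    (hclosed : ∀ f₁ ∈ G, ∀ f₂ ∈ G, vfBracket f₁ f₂ ∈ G)
    (hone : (fun _ => (1 : ℝ)) ∈ G) : finrank ℝ G ≤ 3 := by
  have hdiff : ∀ f : G, Differentiable ℝ (f : ℝ → ℝ) :=
    fun f => (hsmooth f.1 f.2).differentiable (by simp)
  set Φ : G →ₗ[ℝ] (Fin 3 → ℝ) :=
    { toFun := fun f i => iteratedDeriv (i : ℕ) f.1 0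
      map_add' := by
        intro f g
        funext i
        show iteratedDeriv (i:ℕ) (f.1 + g.1) 0 = _
        have : (f.1 + g.1) = fun y => f.1 y + g.1 y := rfl
        rw [this, iteratedDeriv_add' (hsmooth f.1 f.2) (hsmooth g.1 g.2)]
        rfl
      map_smul' := by
        intro a f
        funext i
        show iteratedDeriv (i:ℕ) (a • f.1) 0 = a * iteratedDeriv (i:ℕ) f.1 0
        have h := iteratedDeriv_smul' (hsmooth f.1 f.2) a (i:ℕ)
        have : (a • f.1) = fun y => a * f.1 y := rfl
        rw [this, h] } with hPhi
  have hinj : Function.Injective Φ := by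
    rw [← LinearMap.ker_eq_bot, LinearMap.ker_eq_bot']
    intro f hf0
    apply Subtype.ext
    apply jet3 G hsmooth hclosed hone f.1 f.2
    intro i hi
    have := congrFun hf0 ⟨i, hi⟩
    simpa [hPhi] using this
  calc finrank ℝ G ≤ finrank ℝ (Fin 3 → ℝ) := LinearMap.finrank_le_finrank_of_injective hinj
  _ = 3 := by simp

-- ==== from s5.lean ====

/-- family `(p + q y + s y²) e^{r y}` -/
noncomputable def FA (p q s r : ℝ) : ℝ → ℝ := fun y => (p + q*y + s*y^2) * Real.exp (r*y)
/-- family `e^{a y} (p sin (b y) + q cos (b y))` -/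
noncomputable def FB (a b p q : ℝ) : ℝ → ℝ :=
  fun y => Real.exp (a*y) * (p * Real.sin (b*y) + q * Real.cos (b*y))
/-- family `p sinh (l y) + q cosh (l y)` -/
noncomputable def FC (l p q : ℝ) : ℝ → ℝ := fun y => p * Real.sinh (l*y) + q * Real.cosh (l*y)

theorem smooth_FA (p q s r : ℝ) : ContDiff ℝ (⊤:ℕ∞) (FA p q s r) := by
  unfold FA; fun_prop

theorem smooth_FB (a b p q : ℝ) : ContDiff ℝ (⊤:ℕ∞) (FB a b p q) := by
  unfold FB
  exact (Real.contDiff_exp.comp (contDiff_const.mul contDiff_id)).mul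
    ((contDiff_const.mul (Real.contDiff_sin.comp (contDiff_const.mul contDiff_id))).add
     (contDiff_const.mul (Real.contDiff_cos.comp (contDiff_const.mul contDiff_id))))

theorem smooth_FC (l p q : ℝ) : ContDiff ℝ (⊤:ℕ∞) (FC l p q) := by
  unfold FC
  exact (contDiff_const.mul (Real.contDiff_sinh.comp (contDiff_const.mul contDiff_id))).add
    (contDiff_const.mul (Real.contDiff_cosh.comp (contDiff_const.mul contDiff_id)))

theorem hasDerivAt_expc (r y : ℝ) :
    HasDerivAt (fun y : ℝ => Real.exp (r*y)) (r * Real.exp (r*y)) y := by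
  have := (Real.hasDerivAt_exp (r*y)).comp y ((hasDerivAt_id y).const_mul r)
  exact this.congr_deriv (by ring)

theorem deriv_FA (p q s r : ℝ) :
    deriv (FA p q s r) = FA (q + r*p) (2*s + r*q) (r*s) r := by
  funext y
  have hq : HasDerivAt (fun y : ℝ => p + q*y) q y := by
    simpa using ((hasDerivAt_id y).const_mul q).const_add p
  have hsq := (hasDerivAt_pow 2 y).const_mul s
  have h1 := hq.add hsq
  have h := h1.mul (hasDerivAt_expc r y)
  rw [show FA p q s r = fun y => (p + q*y + s*y^2) * Real.exp (r*y) from rfl]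
  rw [show deriv (fun y => (p + q*y + s*y^2) * Real.exp (r*y)) y = _ from h.deriv]
  simp only [Pi.add_apply]
  show _ = (q + r*p + (2*s + r*q)*y + (r*s)*y^2) * Real.exp (r*y)
  ring

theorem deriv_FB (a b p q : ℝ) :
    deriv (FB a b p q) = FB a b (a*p - b*q) (a*q + b*p) := by
  funext y
  have hsin : HasDerivAt (fun y : ℝ => Real.sin (b*y)) (b * Real.cos (b*y)) y := by
    have := (Real.hasDerivAt_sin (b*y)).comp y ((hasDerivAt_id y).const_mul b)
    exact this.congr_deriv (by ring)
  have hcos : HasDerivAt (fun y : ℝ => Real.cos (b*y)) (-(b * Real.sin (b*y))) y := by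
    have := (Real.hasDerivAt_cos (b*y)).comp y ((hasDerivAt_id y).const_mul b)
    exact this.congr_deriv (by ring)
  have h2 : HasDerivAt (fun y : ℝ => p * Real.sin (b*y) + q * Real.cos (b*y))
      (p * (b * Real.cos (b*y)) + q * (-(b * Real.sin (b*y)))) y :=
    (hsin.const_mul p).add (hcos.const_mul q)
  have h := (hasDerivAt_expc a y).mul h2
  rw [show FB a b p q = fun y => Real.exp (a*y) * (p * Real.sin (b*y) + q * Real.cos (b*y)) from rfl]
  rw [show deriv (fun y => Real.exp (a*y) * (p * Real.sin (b*y) + q * Real.cos (b*y))) y = _ from h.deriv]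
  show _ = Real.exp (a*y) * ((a*p - b*q) * Real.sin (b*y) + (a*q + b*p) * Real.cos (b*y))
  ring

theorem deriv_FC (l p q : ℝ) :
    deriv (FC l p q) = FC l (q*l) (p*l) := by
  funext y
  have hsinh : HasDerivAt (fun y : ℝ => Real.sinh (l*y)) (l * Real.cosh (l*y)) y := by
    have := (Real.hasDerivAt_sinh (l*y)).comp y ((hasDerivAt_id y).const_mul l)
    exact this.congr_deriv (by ring)
  have hcosh : HasDerivAt (fun y : ℝ => Real.cosh (l*y)) (l * Real.sinh (l*y)) y := by
    have := (Real.hasDerivAt_cosh (l*y)).comp y ((hasDerivAt_id y).const_mul l)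
    exact this.congr_deriv (by ring)
  have h := (hsinh.const_mul p).add (hcosh.const_mul q)
  rw [show FC l p q = fun y => p * Real.sinh (l*y) + q * Real.cosh (l*y) from rfl]
  rw [show deriv (fun y => p * Real.sinh (l*y) + q * Real.cosh (l*y)) y = _ from h.deriv]
  show _ = (q*l) * Real.sinh (l*y) + (p*l) * Real.cosh (l*y)
  ring

theorem iD_succ_FA (n : ℕ) (p q s r : ℝ) : iteratedDeriv (n+1) (FA p q s r)
    = iteratedDeriv n (FA (q + r*p) (2*s + r*q) (r*s) r) := by
  rw [iteratedDeriv_succ', deriv_FA]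

theorem iD_succ_FB (n : ℕ) (a b p q : ℝ) : iteratedDeriv (n+1) (FB a b p q)
    = iteratedDeriv n (FB a b (a*p - b*q) (a*q + b*p)) := by
  rw [iteratedDeriv_succ', deriv_FB]

theorem iD_succ_FC (n : ℕ) (l p q : ℝ) : iteratedDeriv (n+1) (FC l p q)
    = iteratedDeriv n (FC l (q*l) (p*l)) := by
  rw [iteratedDeriv_succ', deriv_FC]

theorem FA_zero (p q s r : ℝ) : FA p q s r 0 = p := by simp [FA]
theorem FB_zero (a b p q : ℝ) : FB a b p q 0 = q := by simp [FB]
theorem FC_zero (l p q : ℝ) : FC l p q 0 = q := by simp [FC]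

/-- matching lemma for third-order ODEs -/
theorem match3 (P Q : ℝ) (f g : ℝ → ℝ) (hf : ContDiff ℝ (⊤:ℕ∞) f) (hg : ContDiff ℝ (⊤:ℕ∞) g)
    (hodef : ∀ x, iteratedDeriv 3 f x = Q * iteratedDeriv 1 f x + P * iteratedDeriv 2 f x)
    (hodeg : ∀ x, iteratedDeriv 3 g x = Q * iteratedDeriv 1 g x + P * iteratedDeriv 2 g x)
    (j0 : g 0 = f 0) (j1 : iteratedDeriv 1 g 0 = iteratedDeriv 1 f 0)
    (j2 : iteratedDeriv 2 g 0 = iteratedDeriv 2 f 0) : f = g := by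
  have key : (fun y => f y - g y) = 0 := by
    apply ode_unique 3 (fun i => if i = 1 then Q else if i = 2 then P else 0) _ (hf.sub hg)
    · intro x
      have e1 := congrFun (iteratedDeriv_sub' hf hg 1) x
      have e2 := congrFun (iteratedDeriv_sub' hf hg 2) x
      have e3 := congrFun (iteratedDeriv_sub' hf hg 3) x
      rw [Finset.sum_range_succ, Finset.sum_range_succ, Finset.sum_range_succ,
        Finset.sum_range_zero, e3, e1, e2]
      norm_num
      rw [hodef x, hodeg x]
      simp only [iteratedDeriv_one]
      ring
    · intro i hi
      interval_cases i
      · show f 0 - g 0 = 0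
        rw [j0]; ring
      · rw [congrFun (iteratedDeriv_sub' hf hg 1) 0, j1]; ring
      · rw [congrFun (iteratedDeriv_sub' hf hg 2) 0, j2]; ring
  funext y
  have := congrFun key y
  simp only [Pi.zero_apply] at this
  linarith

/-- matching lemma for second-order ODEs -/
theorem match2 (P : ℝ) (f g : ℝ → ℝ) (hf : ContDiff ℝ (⊤:ℕ∞) f) (hg : ContDiff ℝ (⊤:ℕ∞) g)
    (hodef : ∀ x, iteratedDeriv 2 f x = P * iteratedDeriv 1 f x)
    (hodeg : ∀ x, iteratedDeriv 2 g x = P * iteratedDeriv 1 g x)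
    (j0 : g 0 = f 0) (j1 : iteratedDeriv 1 g 0 = iteratedDeriv 1 f 0) : f = g := by
  have key : (fun y => f y - g y) = 0 := by
    apply ode_unique 2 (fun i => if i = 1 then P else 0) _ (hf.sub hg)
    · intro x
      have e1 := congrFun (iteratedDeriv_sub' hf hg 1) x
      have e2 := congrFun (iteratedDeriv_sub' hf hg 2) x
      rw [Finset.sum_range_succ, Finset.sum_range_succ, Finset.sum_range_zero, e2, e1]
      norm_num
      rw [hodef x, hodeg x]
      simp only [iteratedDeriv_one]
      ring
    · intro i hi
      interval_cases i
      · show f 0 - g 0 = 0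
        rw [j0]; ring
      · rw [congrFun (iteratedDeriv_sub' hf hg 1) 0, j1]; ring
  funext y
  have := congrFun key y
  simp only [Pi.zero_apply] at this
  linarith

theorem match1 (f g : ℝ → ℝ) (hf : ContDiff ℝ (⊤:ℕ∞) f) (hg : ContDiff ℝ (⊤:ℕ∞) g)
    (hodef : ∀ x, iteratedDeriv 1 f x = 0) (hodeg : ∀ x, iteratedDeriv 1 g x = 0)
    (j0 : g 0 = f 0) : f = g := by
  have key : (fun y => f y - g y) = 0 := by
    apply ode_unique 1 (fun _ => 0) _ (hf.sub hg)
    · intro x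
      have e1 := congrFun (iteratedDeriv_sub' hf hg 1) x
      rw [Finset.sum_range_succ, Finset.sum_range_zero, e1]
      rw [hodef x, hodeg x]
      simp
    · intro i hi
      interval_cases i
      show f 0 - g 0 = 0
      rw [j0]; ring
  funext y
  have := congrFun key y
  simp only [Pi.zero_apply] at this
  linarith

-- ==== from s6.lean ====
theorem FC_congr {l p q p' q' : ℝ} (h1 : p = p') (h2 : q = q') :
    FC l p q = FC l p' q' := by rw [h1, h2]

theorem FA_congr {p q s r p' q' s' : ℝ} (h1 : p = p') (h2 : q = q') (h3 : s = s') :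
    FA p q s r = FA p' q' s' r := by rw [h1, h2, h3]

theorem FB_congr {a b p q p' q' : ℝ} (h1 : p = p') (h2 : q = q') :
    FB a b p q = FB a b p' q' := by rw [h1, h2]

theorem iD1_FA (p q s r : ℝ) : iteratedDeriv 1 (FA p q s r) = FA (q + r*p) (2*s + r*q) (r*s) r := by
  show iteratedDeriv (0+1) _ = _
  rw [iD_succ_FA, iteratedDeriv_zero]

theorem iD2_FA (p q s r : ℝ) : iteratedDeriv 2 (FA p q s r)
    = FA (2*s + 2*r*q + r^2*p) (4*r*s + r^2*q) (r^2*s) r := by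
  show iteratedDeriv (1+1) _ = _
  rw [iD_succ_FA, iD1_FA]
  exact FA_congr (by ring) (by ring) (by ring)

theorem iD3_FA (p q s r : ℝ) : iteratedDeriv 3 (FA p q s r)
    = FA (6*r*s + 3*r^2*q + r^3*p) (6*r^2*s + r^3*q) (r^3*s) r := by
  show iteratedDeriv (2+1) _ = _
  rw [iD_succ_FA, iD2_FA]
  exact FA_congr (by ring) (by ring) (by ring)

theorem iD1_FB (a b p q : ℝ) : iteratedDeriv 1 (FB a b p q) = FB a b (a*p - b*q) (a*q + b*p) := by
  show iteratedDeriv (0+1) _ = _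
  rw [iD_succ_FB, iteratedDeriv_zero]

theorem iD2_FB (a b p q : ℝ) : iteratedDeriv 2 (FB a b p q)
    = FB a b ((a^2-b^2)*p - 2*a*b*q) ((a^2-b^2)*q + 2*a*b*p) := by
  show iteratedDeriv (1+1) _ = _
  rw [iD_succ_FB, iD1_FB]
  exact FB_congr (by ring) (by ring)

theorem iD3_FB (a b p q : ℝ) : iteratedDeriv 3 (FB a b p q)
    = FB a b ((a^3-3*a*b^2)*p - (3*a^2*b-b^3)*q) ((a^3-3*a*b^2)*q + (3*a^2*b-b^3)*p) := by
  show iteratedDeriv (2+1) _ = _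
  rw [iD_succ_FB, iD2_FB]
  exact FB_congr (by ring) (by ring)

theorem iD1_FC (l p q : ℝ) : iteratedDeriv 1 (FC l p q) = FC l (q*l) (p*l) := by
  show iteratedDeriv (0+1) _ = _
  rw [iD_succ_FC, iteratedDeriv_zero]

theorem iD2_FC (l p q : ℝ) : iteratedDeriv 2 (FC l p q) = FC l (p*l^2) (q*l^2) := by
  show iteratedDeriv (1+1) _ = _
  rw [iD_succ_FC, iD1_FC]
  exact FC_congr (by ring) (by ring)

theorem iD3_FC (l p q : ℝ) : iteratedDeriv 3 (FC l p q) = FC l (q*l^3) (p*l^3) := by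
  show iteratedDeriv (2+1) _ = _
  rw [iD_succ_FC, iD2_FC]
  exact FC_congr (by ring) (by ring)

theorem iD_const (α : ℝ) (j : ℕ) (hj : 1 ≤ j) : iteratedDeriv j (fun _ : ℝ => α) = fun _ => 0 := by
  obtain ⟨j', rfl⟩ : ∃ j', j = j' + 1 := ⟨j - 1, by omega⟩
  rw [iteratedDeriv_succ']
  have : deriv (fun _ : ℝ => α) = (0 : ℝ → ℝ) := by funext x; simp
  rw [this, iteratedDeriv_zero_fun]
  rfl

/-- iterated derivatives of `α + (μ u + ν v)`, order ≥ 1 -/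
theorem iD_combo2 (α μ ν : ℝ) (u v : ℝ → ℝ) (hu : ContDiff ℝ (⊤:ℕ∞) u) (hv : ContDiff ℝ (⊤:ℕ∞) v)
    (j : ℕ) (hj : 1 ≤ j) :
    iteratedDeriv j (fun y => α + (μ * u y + ν * v y))
      = fun x => μ * iteratedDeriv j u x + ν * iteratedDeriv j v x := by
  have e1 : iteratedDeriv j (fun y => μ * u y + ν * v y)
      = fun x => μ * iteratedDeriv j u x + ν * iteratedDeriv j v x := by
    rw [iteratedDeriv_add' ((contDiff_const.mul hu)) ((contDiff_const.mul hv)) j]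
    funext x
    rw [congrFun (iteratedDeriv_smul' hu μ j) x, congrFun (iteratedDeriv_smul' hv ν j) x]
  rw [iteratedDeriv_add' contDiff_const ((contDiff_const.mul hu).add (contDiff_const.mul hv)) j]
  funext x
  rw [congrFun (iD_const α j hj) x, congrFun e1 x]
  ring

theorem iD_combo1 (α μ : ℝ) (u : ℝ → ℝ) (hu : ContDiff ℝ (⊤:ℕ∞) u) (j : ℕ) (hj : 1 ≤ j) :
    iteratedDeriv j (fun y => α + μ * u y) = fun x => μ * iteratedDeriv j u x := by
  rw [iteratedDeriv_add' contDiff_const (contDiff_const.mul hu) j]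
  funext x
  rw [congrFun (iD_const α j hj) x, congrFun (iteratedDeriv_smul' hu μ j) x]
  ring

-- ==== from s7.lean ====
theorem G_eq_span3 (G : Submodule ℝ (ℝ → ℝ)) [FiniteDimensional ℝ G]
    (hs : ∀ f ∈ G, ContDiff ℝ (⊤:ℕ∞) f) (h3 : finrank ℝ G = 3) (P Q : ℝ)
    (hode3 : ∀ f ∈ G, ∀ x : ℝ,
      iteratedDeriv 3 f x = Q * iteratedDeriv 1 f x + P * iteratedDeriv 2 f x)
    (u v : ℝ → ℝ) (hu : ContDiff ℝ (⊤:ℕ∞) u) (hv : ContDiff ℝ (⊤:ℕ∞) v)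
    (hodeu : ∀ x : ℝ, iteratedDeriv 3 u x = Q * iteratedDeriv 1 u x + P * iteratedDeriv 2 u x)
    (hodev : ∀ x : ℝ, iteratedDeriv 3 v x = Q * iteratedDeriv 1 v x + P * iteratedDeriv 2 v x)
    (hsolv : ∀ j0 j1 j2 : ℝ, ∃ α μ ν : ℝ,
      α + (μ * u 0 + ν * v 0) = j0 ∧
      μ * iteratedDeriv 1 u 0 + ν * iteratedDeriv 1 v 0 = j1 ∧
      μ * iteratedDeriv 2 u 0 + ν * iteratedDeriv 2 v 0 = j2) :
    G = span ℝ ({fun _ => 1, u, v} : Set (ℝ → ℝ)) := by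
  haveI : FiniteDimensional ℝ (span ℝ ({fun _ => 1, u, v} : Set (ℝ → ℝ))) :=
    FiniteDimensional.span_of_finite ℝ (Set.toFinite _)
  apply Submodule.eq_of_le_of_finrank_le
  · intro f hf
    obtain ⟨α, μ, ν, e0, e1, e2⟩ := hsolv (f 0) (iteratedDeriv 1 f 0) (iteratedDeriv 2 f 0)
    have hgs : ContDiff ℝ (⊤:ℕ∞) (fun y => α + (μ * u y + ν * v y)) :=
      contDiff_const.add ((contDiff_const.mul hu).add (contDiff_const.mul hv))
    have hodeg : ∀ x : ℝ, iteratedDeriv 3 (fun y => α + (μ * u y + ν * v y)) x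
        = Q * iteratedDeriv 1 (fun y => α + (μ * u y + ν * v y)) x
          + P * iteratedDeriv 2 (fun y => α + (μ * u y + ν * v y)) x := by
      intro x
      rw [congrFun (iD_combo2 α μ ν u v hu hv 3 (by norm_num)) x,
        congrFun (iD_combo2 α μ ν u v hu hv 1 (by norm_num)) x,
        congrFun (iD_combo2 α μ ν u v hu hv 2 (by norm_num)) x,
        hodeu x, hodev x]
      ring
    have hfg : f = fun y => α + (μ * u y + ν * v y) := by
      refine match3 P Q f _ (hs f hf) hgs (hode3 f hf) hodeg e0 ?_ ?_
      · rw [congrFun (iD_combo2 α μ ν u v hu hv 1 (by norm_num)) 0]; exact e1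
      · rw [congrFun (iD_combo2 α μ ν u v hu hv 2 (by norm_num)) 0]; exact e2
    refine mem_span_triple α μ ν ?_
    funext y
    rw [hfg]
    show α * 1 + μ * u y + ν * v y = α + (μ * u y + ν * v y)
    ring
  · rw [h3]; exact finrank_span_triple_le _ _ _

theorem G_eq_span2 (G : Submodule ℝ (ℝ → ℝ)) [FiniteDimensional ℝ G]
    (hs : ∀ f ∈ G, ContDiff ℝ (⊤:ℕ∞) f) (h2 : finrank ℝ G = 2) (P : ℝ)
    (hode2 : ∀ f ∈ G, ∀ x : ℝ, iteratedDeriv 2 f x = P * iteratedDeriv 1 f x)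
    (u : ℝ → ℝ) (hu : ContDiff ℝ (⊤:ℕ∞) u)
    (hodeu : ∀ x : ℝ, iteratedDeriv 2 u x = P * iteratedDeriv 1 u x)
    (hsolv : ∀ j0 j1 : ℝ, ∃ α μ : ℝ,
      α + μ * u 0 = j0 ∧ μ * iteratedDeriv 1 u 0 = j1) :
    G = span ℝ ({fun _ => 1, u} : Set (ℝ → ℝ)) := by
  haveI : FiniteDimensional ℝ (span ℝ ({fun _ => 1, u} : Set (ℝ → ℝ))) :=
    FiniteDimensional.span_of_finite ℝ (Set.toFinite _)
  apply Submodule.eq_of_le_of_finrank_le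
  · intro f hf
    obtain ⟨α, μ, e0, e1⟩ := hsolv (f 0) (iteratedDeriv 1 f 0)
    have hgs : ContDiff ℝ (⊤:ℕ∞) (fun y => α + μ * u y) :=
      contDiff_const.add (contDiff_const.mul hu)
    have hodeg : ∀ x : ℝ, iteratedDeriv 2 (fun y => α + μ * u y) x
        = P * iteratedDeriv 1 (fun y => α + μ * u y) x := by
      intro x
      rw [congrFun (iD_combo1 α μ u hu 2 (by norm_num)) x,
        congrFun (iD_combo1 α μ u hu 1 (by norm_num)) x, hodeu x]
      ring
    have hfg : f = fun y => α + μ * u y := by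
      refine match2 P f _ (hs f hf) hgs (hode2 f hf) hodeg e0 ?_
      rw [congrFun (iD_combo1 α μ u hu 1 (by norm_num)) 0]; exact e1
    rw [Submodule.mem_span_pair]
    refine ⟨α, μ, ?_⟩
    funext y
    rw [hfg]
    show α * 1 + μ * u y = α + μ * u y
    ring
  · rw [h2]; exact finrank_span_pair_le _ _

-- ==== from s9.lean ====
set_option maxHeartbeats 1000000 in
theorem case3 (G : Submodule ℝ (ℝ → ℝ)) [FiniteDimensional ℝ G]
    (hs : ∀ f ∈ G, ContDiff ℝ (⊤:ℕ∞) f)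
    (hclosed : ∀ f₁ ∈ G, ∀ f₂ ∈ G, vfBracket f₁ f₂ ∈ G)
    (hone : (fun _ => (1 : ℝ)) ∈ G)
    (h3 : finrank ℝ G = 3) (P Q : ℝ)
    (hode3 : ∀ f ∈ G, ∀ x : ℝ,
      iteratedDeriv 3 f x = Q * iteratedDeriv 1 f x + P * iteratedDeriv 2 f x) :
    (∃ l : ℝ, l ≠ 0 ∧
      G = Submodule.span ℝ
        ({fun _ => 1, fun x => Real.sin (l * x), fun x => Real.cos (l * x)} : Set (ℝ → ℝ))) ∨
    G = Submodule.span ℝ ({fun _ => 1, fun x => x, fun x => x ^ 2} : Set (ℝ → ℝ)) ∨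
    (∃ l : ℝ, l ≠ 0 ∧
      G = Submodule.span ℝ
        ({fun _ => 1, fun x => Real.sinh (l * x), fun x => Real.cosh (l * x)} : Set (ℝ → ℝ))) := by
  have hP : P = 0 := by
    by_contra hP
    rcases eq_or_ne Q 0 with hQ | hQ
    · -- basis {1, x, e^{Px}} ; bracket gives contradiction
      have hspan := G_eq_span3 G hs h3 P Q hode3 (FA 0 1 0 0) (FA 1 0 0 P)
        (smooth_FA _ _ _ _) (smooth_FA _ _ _ _)
        (by
          intro x
          rw [iD3_FA, iD1_FA, iD2_FA, hQ]
          simp only [FA]; ring)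
        (by
          intro x
          rw [iD3_FA, iD1_FA, iD2_FA, hQ]
          simp only [FA]; ring)
        (by
          intro j0 j1 j2
          rw [iD1_FA, iD2_FA, iD1_FA, iD2_FA, FA_zero, FA_zero, FA_zero, FA_zero, FA_zero,
            FA_zero]
          refine ⟨j0 - j2/P^2, j1 - (j2/P^2)*P, j2/P^2, ?_, ?_, ?_⟩ <;> field_simp <;> ring)
      have huG : FA 0 1 0 0 ∈ G := by
        rw [hspan]; exact subset_span (by simp)
      have hvG : FA 1 0 0 P ∈ G := by
        rw [hspan]; exact subset_span (by simp)
      have hwG := hclosed _ huG _ hvG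
      have hweq : vfBracket (FA 0 1 0 0) (FA 1 0 0 P) = FA (-1) P 0 P := by
        funext y
        show FA 0 1 0 0 y * deriv (FA 1 0 0 P) y - FA 1 0 0 P y * deriv (FA 0 1 0 0) y = _
        rw [deriv_FA, deriv_FA]
        simp only [FA]
        have hE0 : Real.exp (0*y) = 1 := by norm_num
        rw [hE0]; ring
      rw [hweq] at hwG
      have hrel := hode3 _ hwG 0
      rw [iD3_FA, iD1_FA, iD2_FA, FA_zero, FA_zero, FA_zero] at hrel
      rw [hQ] at hrel
      have : P^3 = 0 := by nlinarith [hrel]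
      exact hP ((pow_eq_zero_iff (by norm_num : (3:ℕ) ≠ 0)).mp this)
    · rcases lt_trichotomy (P^2 + 4*Q) 0 with hΔ | hΔ | hΔ
      · -- complex roots: basis {1, e^{ax}sin(bx), e^{ax}cos(bx)}, a = P/2
        obtain ⟨b, hbpos, hb2⟩ : ∃ b : ℝ, 0 < b ∧ b^2 = -(P^2+4*Q)/4 := by
          refine ⟨Real.sqrt (-(P^2+4*Q))/2, div_pos (Real.sqrt_pos.mpr (by linarith)) two_pos, ?_⟩
          rw [div_pow, Real.sq_sqrt (by linarith)]
          norm_num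
        have hQb : Q = -(P^2)/4 - b^2 := by rw [hb2]; ring
        have hbne : b ≠ 0 := ne_of_gt hbpos
        have hab : (P/2)^2 + b^2 ≠ 0 := by
          have : 0 < (P/2)^2 + b^2 := by nlinarith [sq_nonneg (P/2)]
          exact ne_of_gt this
        have hspan := G_eq_span3 G hs h3 P Q hode3 (FB (P/2) b 1 0) (FB (P/2) b 0 1)
          (smooth_FB _ _ _ _) (smooth_FB _ _ _ _)
          (by
            intro x
            rw [iD3_FB, iD1_FB, iD2_FB, hQb]
            simp only [FB]; ring)
          (by
            intro x
            rw [iD3_FB, iD1_FB, iD2_FB, hQb]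
            simp only [FB]; ring)
          (by
            intro j0 j1 j2
            rw [iD1_FB, iD2_FB, iD1_FB, iD2_FB, FB_zero, FB_zero, FB_zero, FB_zero, FB_zero,
              FB_zero]
            refine ⟨j0 - (2*(P/2)*j1 - j2)/((P/2)^2+b^2),
              (j1 - ((2*(P/2)*j1 - j2)/((P/2)^2+b^2))*(P/2))/b,
              (2*(P/2)*j1 - j2)/((P/2)^2+b^2), ?_, ?_, ?_⟩ <;>
              field_simp <;> ring)
        have huG : FB (P/2) b 1 0 ∈ G := by rw [hspan]; exact subset_span (by simp)
        have hvG : FB (P/2) b 0 1 ∈ G := by rw [hspan]; exact subset_span (by simp)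
        have hwG := hclosed _ hvG _ huG
        have hweq : vfBracket (FB (P/2) b 0 1) (FB (P/2) b 1 0) = FA b 0 0 P := by
          funext y
          show FB (P/2) b 0 1 y * deriv (FB (P/2) b 1 0) y
              - FB (P/2) b 1 0 y * deriv (FB (P/2) b 0 1) y = _
          rw [deriv_FB, deriv_FB]
          simp only [FB, FA]
          have hE : Real.exp (P/2*y) * Real.exp (P/2*y) = Real.exp (P*y) := by
            rw [← Real.exp_add]; congr 1; ring
          have hpyth : Real.sin (b*y)^2 + Real.cos (b*y)^2 = 1 := Real.sin_sq_add_cos_sq _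
          linear_combination (b * (Real.sin (b*y)^2 + Real.cos (b*y)^2)) * hE
            + (b * Real.exp (P*y)) * hpyth
        rw [hweq] at hwG
        have hrel := hode3 _ hwG 0
        rw [iD3_FA, iD1_FA, iD2_FA, FA_zero, FA_zero, FA_zero] at hrel
        -- P^3 b = Q P b + P^3 b  basically; derive contradiction
        have : Q * P * b = 0 := by nlinarith [hrel]
        rcases mul_eq_zero.mp this with h | h
        · rcases mul_eq_zero.mp h with h' | h'
          · exact hQ h'
          · exact hP h'
        · exact (ne_of_gt hbpos) h
      · -- double root r = P/2
        have hQP : Q = -(P^2)/4 := by linarith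
        have hr : P/2 ≠ 0 := by intro h; apply hP; linarith
        have hspan := G_eq_span3 G hs h3 P Q hode3 (FA 1 0 0 (P/2)) (FA 0 1 0 (P/2))
          (smooth_FA _ _ _ _) (smooth_FA _ _ _ _)
          (by
            intro x
            rw [iD3_FA, iD1_FA, iD2_FA, hQP]
            simp only [FA]; ring)
          (by
            intro x
            rw [iD3_FA, iD1_FA, iD2_FA, hQP]
            simp only [FA]; ring)
          (by
            intro j0 j1 j2
            rw [iD1_FA, iD2_FA, iD1_FA, iD2_FA, FA_zero, FA_zero, FA_zero, FA_zero, FA_zero,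
              FA_zero]
            refine ⟨j0 - (j1 - (j2 - P/2*j1)/(P/2))/(P/2),
              (j1 - (j2 - P/2*j1)/(P/2))/(P/2), (j2 - P/2*j1)/(P/2), ?_, ?_, ?_⟩ <;>
              field_simp <;> ring)
        have huG : FA 1 0 0 (P/2) ∈ G := by rw [hspan]; exact subset_span (by simp)
        have hvG : FA 0 1 0 (P/2) ∈ G := by rw [hspan]; exact subset_span (by simp)
        have hwG := hclosed _ huG _ hvG
        have hweq : vfBracket (FA 1 0 0 (P/2)) (FA 0 1 0 (P/2)) = FA 1 0 0 P := by
          funext y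
          show FA 1 0 0 (P/2) y * deriv (FA 0 1 0 (P/2)) y
              - FA 0 1 0 (P/2) y * deriv (FA 1 0 0 (P/2)) y = _
          rw [deriv_FA, deriv_FA]
          simp only [FA]
          have hE : Real.exp (P/2*y) * Real.exp (P/2*y) = Real.exp (P*y) := by
            rw [← Real.exp_add]; congr 1; ring
          linear_combination hE
        rw [hweq] at hwG
        have hrel := hode3 _ hwG 0
        rw [iD3_FA, iD1_FA, iD2_FA, FA_zero, FA_zero, FA_zero] at hrel
        rw [hQP] at hrel
        have : P^3 = 0 := by nlinarith [hrel]
        exact hP ((pow_eq_zero_iff (by norm_num : (3:ℕ) ≠ 0)).mp this)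
      · -- two distinct real roots
        obtain ⟨t, htpos, ht2⟩ : ∃ t : ℝ, 0 < t ∧ t^2 = P^2 + 4*Q :=
          ⟨Real.sqrt (P^2+4*Q), Real.sqrt_pos.mpr hΔ, Real.sq_sqrt hΔ.le⟩
        obtain ⟨r, hrdef⟩ : ∃ r : ℝ, r = (P+t)/2 := ⟨_, rfl⟩
        obtain ⟨s', hsdef⟩ : ∃ s' : ℝ, s' = (P-t)/2 := ⟨_, rfl⟩
        have hsum : r + s' = P := by rw [hrdef, hsdef]; ring
        have hprod : r * s' = -Q := by rw [hrdef, hsdef]; nlinarith [ht2]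
        have hr2 : r^2 = P*r + Q := by rw [hrdef]; nlinarith [ht2]
        have hs2 : s'^2 = P*s' + Q := by rw [hsdef]; nlinarith [ht2]
        have hrne : r ≠ 0 := by
          intro h; apply hQ; rw [h] at hprod; linarith
        have hsne : s' ≠ 0 := by
          intro h; apply hQ; rw [h] at hprod; linarith
        have hne : s' - r ≠ 0 := by
          rw [hrdef, hsdef]; intro h; exact (ne_of_gt htpos) (by linarith)
        have hspan := G_eq_span3 G hs h3 P Q hode3 (FA 1 0 0 r) (FA 1 0 0 s')
          (smooth_FA _ _ _ _) (smooth_FA _ _ _ _)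
          (by
            intro x
            rw [iD3_FA, iD1_FA, iD2_FA]
            simp only [FA]
            linear_combination (Real.exp (r*x) * r) * hr2)
          (by
            intro x
            rw [iD3_FA, iD1_FA, iD2_FA]
            simp only [FA]
            linear_combination (Real.exp (s'*x) * s') * hs2)
          (by
            intro j0 j1 j2
            rw [iD1_FA, iD2_FA, iD1_FA, iD2_FA, FA_zero, FA_zero, FA_zero, FA_zero, FA_zero,
              FA_zero]
            refine ⟨j0 - (j1 - ((j2 - r*j1)/(s'*(s'-r)))*s')/r - (j2 - r*j1)/(s'*(s'-r)),
              (j1 - ((j2 - r*j1)/(s'*(s'-r)))*s')/r,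
              (j2 - r*j1)/(s'*(s'-r)), ?_, ?_, ?_⟩ <;>
              field_simp <;> ring)
        have huG : FA 1 0 0 r ∈ G := by rw [hspan]; exact subset_span (by simp)
        have hvG : FA 1 0 0 s' ∈ G := by rw [hspan]; exact subset_span (by simp)
        have hwG := hclosed _ huG _ hvG
        have hweq : vfBracket (FA 1 0 0 r) (FA 1 0 0 s') = FA (s' - r) 0 0 P := by
          funext y
          show FA 1 0 0 r y * deriv (FA 1 0 0 s') y
              - FA 1 0 0 s' y * deriv (FA 1 0 0 r) y = _
          rw [deriv_FA, deriv_FA]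
          simp only [FA]
          have hE : Real.exp (r*y) * Real.exp (s'*y) = Real.exp (P*y) := by
            rw [← Real.exp_add]; congr 1; rw [← hsum]; ring
          linear_combination (s' - r) * hE
        rw [hweq] at hwG
        have hrel := hode3 _ hwG 0
        rw [iD3_FA, iD1_FA, iD2_FA, FA_zero, FA_zero, FA_zero] at hrel
        have : Q * P * (s' - r) = 0 := by linear_combination -hrel
        rcases mul_eq_zero.mp this with h | h
        · rcases mul_eq_zero.mp h with h' | h'
          · exact hQ h'
          · exact hP h'
        · exact hne h
  -- now P = 0
  subst hP
  rcases lt_trichotomy Q 0 with hQ | hQ | hQ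
  · -- sin / cos
    left
    obtain ⟨l, hlpos, hl2⟩ : ∃ l : ℝ, 0 < l ∧ l^2 = -Q :=
      ⟨Real.sqrt (-Q), Real.sqrt_pos.mpr (by linarith), Real.sq_sqrt (by linarith)⟩
    have hQl : Q = -l^2 := by linarith
    refine ⟨l, ne_of_gt hlpos, ?_⟩
    have hueq : (fun x : ℝ => Real.sin (l*x)) = FB 0 l 1 0 := by
      funext y; simp [FB]
    have hveq : (fun x : ℝ => Real.cos (l*x)) = FB 0 l 0 1 := by
      funext y; simp [FB]
    refine G_eq_span3 G hs h3 0 Q hode3 _ _ ?_ ?_ ?_ ?_ ?_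
    · rw [hueq]; exact smooth_FB _ _ _ _
    · rw [hveq]; exact smooth_FB _ _ _ _
    · intro x
      rw [hueq, iD3_FB, iD1_FB, iD2_FB, hQl]
      simp only [FB]; ring
    · intro x
      rw [hveq, iD3_FB, iD1_FB, iD2_FB, hQl]
      simp only [FB]; ring
    · intro j0 j1 j2
      rw [hueq, hveq, iD1_FB, iD2_FB, iD1_FB, iD2_FB]
      simp only [FB_zero, mul_zero, Real.sin_zero, Real.cos_zero]
      refine ⟨j0 + j2/l^2, j1/l, -j2/l^2, ?_, ?_, ?_⟩ <;> field_simp <;> ring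
  · -- polynomials
    right; left
    have hueq : (fun x : ℝ => x) = FA 0 1 0 0 := by funext y; simp [FA]
    have hveq : (fun x : ℝ => x^2) = FA 0 0 1 0 := by funext y; simp [FA]
    refine G_eq_span3 G hs h3 0 Q hode3 _ _ ?_ ?_ ?_ ?_ ?_
    · rw [hueq]; exact smooth_FA _ _ _ _
    · rw [hveq]; exact smooth_FA _ _ _ _
    · intro x
      rw [hueq, iD3_FA, iD1_FA, iD2_FA, hQ]
      simp only [FA]; ring
    · intro x
      rw [hveq, iD3_FA, iD1_FA, iD2_FA, hQ]
      simp only [FA]; ring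
    · intro j0 j1 j2
      rw [hueq, hveq, iD1_FA, iD2_FA, iD1_FA, iD2_FA]
      simp only [FA_zero]
      refine ⟨j0, j1, j2/2, ?_, ?_, ?_⟩ <;> norm_num
  · -- sinh / cosh
    right; right
    obtain ⟨l, hlpos, hl2⟩ : ∃ l : ℝ, 0 < l ∧ l^2 = Q :=
      ⟨Real.sqrt Q, Real.sqrt_pos.mpr hQ, Real.sq_sqrt hQ.le⟩
    have hQl : Q = l^2 := hl2.symm
    refine ⟨l, ne_of_gt hlpos, ?_⟩
    have hueq : (fun x : ℝ => Real.sinh (l*x)) = FC l 1 0 := by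
      funext y; simp [FC]
    have hveq : (fun x : ℝ => Real.cosh (l*x)) = FC l 0 1 := by
      funext y; simp [FC]
    refine G_eq_span3 G hs h3 0 Q hode3 _ _ ?_ ?_ ?_ ?_ ?_
    · rw [hueq]; exact smooth_FC _ _ _
    · rw [hveq]; exact smooth_FC _ _ _
    · intro x
      rw [hueq, iD3_FC, iD1_FC, iD2_FC, hQl]
      simp only [FC]; ring
    · intro x
      rw [hveq, iD3_FC, iD1_FC, iD2_FC, hQl]
      simp only [FC]; ring
    · intro j0 j1 j2
      rw [hueq, hveq, iD1_FC, iD2_FC, iD1_FC, iD2_FC]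
      simp only [FC_zero, mul_zero, Real.sinh_zero, Real.cosh_zero]
      refine ⟨j0 - j2/l^2, j1/l, j2/l^2, ?_, ?_, ?_⟩ <;> field_simp <;> ring

-- ==== from s8.lean ====
/-- Lie's theorem in one dimension: a finite-dimensional Lie algebra of smooth vector fields
on `ℝ` containing `∂/∂x` is one of the six listed spans. -/
theorem stmt9 (G : Submodule ℝ (ℝ → ℝ)) [FiniteDimensional ℝ G]
    (hsmooth : ∀ f ∈ G, ContDiff ℝ (⊤ : ℕ∞) f)
    (hclosed : ∀ f₁ ∈ G, ∀ f₂ ∈ G, vfBracket f₁ f₂ ∈ G)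
    (hone : (fun _ => (1 : ℝ)) ∈ G) :
    G = Submodule.span ℝ ({fun _ => 1} : Set (ℝ → ℝ)) ∨
    (∃ l : ℝ, l ≠ 0 ∧
      G = Submodule.span ℝ ({fun _ => 1, fun x => Real.exp (l * x)} : Set (ℝ → ℝ))) ∨
    G = Submodule.span ℝ ({fun _ => 1, fun x => x} : Set (ℝ → ℝ)) ∨
    (∃ l : ℝ, l ≠ 0 ∧
      G = Submodule.span ℝ
        ({fun _ => 1, fun x => Real.sin (l * x), fun x => Real.cos (l * x)} : Set (ℝ → ℝ))) ∨
    G = Submodule.span ℝ ({fun _ => 1, fun x => x, fun x => x ^ 2} : Set (ℝ → ℝ)) ∨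
    (∃ l : ℝ, l ≠ 0 ∧
      G = Submodule.span ℝ
        ({fun _ => 1, fun x => Real.sinh (l * x), fun x => Real.cosh (l * x)} : Set (ℝ → ℝ))) := by
  classical
  have hs : ∀ f ∈ G, ContDiff ℝ (⊤:ℕ∞) f := fun f hf => (hsmooth f hf).of_le (by simp)
  obtain ⟨c, hc0, hodeN⟩ := exists_ode G hs hclosed hone
  have hone_ne : ((⟨fun _ => (1:ℝ), hone⟩ : G)) ≠ 0 := by
    intro h
    have := congrFun (congrArg Subtype.val h) 0
    simpa using this
  haveI : Nontrivial G := nontrivial_of_ne _ _ hone_ne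
  have hn1 : 1 ≤ finrank ℝ G := finrank_pos
  have hn3 : finrank ℝ G ≤ 3 := finrank_le_three G hs hclosed hone
  have hcase : finrank ℝ G = 1 ∨ finrank ℝ G = 2 ∨ finrank ℝ G = 3 := by omega
  rcases hcase with h1 | h2 | h3
  · -- dimension 1
    left
    rw [h1] at hodeN
    have hode1 : ∀ f ∈ G, ∀ x : ℝ, iteratedDeriv 1 f x = 0 := by
      intro f hf x
      have := hodeN f hf x
      rwa [Finset.sum_range_one, hc0, zero_mul] at this
    apply le_antisymm
    · intro f hf
      rw [Submodule.mem_span_singleton]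
      refine ⟨f 0, ?_⟩
      have hf1 : f = fun _ => f 0 :=
        match1 f _ (hs f hf) contDiff_const (hode1 f hf)
          (fun x => by rw [iteratedDeriv_one]; simp) rfl
      funext y
      show f 0 * 1 = f y
      rw [congrFun hf1 y]; ring
    · rw [Submodule.span_le, Set.singleton_subset_iff]
      exact hone
  · -- dimension 2
    rw [h2] at hodeN
    have hode2 : ∀ f ∈ G, ∀ x : ℝ, iteratedDeriv 2 f x = c 1 * iteratedDeriv 1 f x := by
      intro f hf x
      have := hodeN f hf x
      rwa [Finset.sum_range_succ, Finset.sum_range_one, hc0, zero_mul, zero_add] at this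
    by_cases hβ : c 1 = 0
    · right; right; left
      have hueq : (fun x : ℝ => x) = FA 0 1 0 0 := by
        funext y; simp [FA]
      refine G_eq_span2 G hs h2 (c 1) hode2 (fun x => x) ?_ ?_ ?_
      · exact contDiff_id
      · intro x
        rw [hueq, iD2_FA, iD1_FA, hβ]
        simp [FA]
      · intro j0 j1
        refine ⟨j0, j1, by simp, ?_⟩
        rw [hueq, iD1_FA, FA_zero]
        norm_num
    · right; left
      refine ⟨c 1, hβ, ?_⟩
      have hueq : (fun x : ℝ => Real.exp (c 1 * x)) = FA 1 0 0 (c 1) := by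
        funext y; simp [FA]
      refine G_eq_span2 G hs h2 (c 1) hode2 (fun x => Real.exp (c 1 * x)) ?_ ?_ ?_
      · exact Real.contDiff_exp.comp (contDiff_const.mul contDiff_id)
      · intro x
        rw [hueq, iD2_FA, iD1_FA]
        simp only [FA]
        ring
      · intro j0 j1
        have h0 : (fun x : ℝ => Real.exp (c 1 * x)) 0 = 1 := by simp
        have h1' : iteratedDeriv 1 (fun x : ℝ => Real.exp (c 1 * x)) 0 = c 1 := by
          rw [hueq, iD1_FA, FA_zero]; norm_num
        refine ⟨j0 - j1 / c 1, j1 / c 1, ?_, ?_⟩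
        · simp
        · rw [h1']; field_simp
  · -- dimension 3
    rw [h3] at hodeN
    have hode3 : ∀ f ∈ G, ∀ x : ℝ,
        iteratedDeriv 3 f x = c 1 * iteratedDeriv 1 f x + c 2 * iteratedDeriv 2 f x := by
      intro f hf x
      have := hodeN f hf x
      rwa [Finset.sum_range_succ, Finset.sum_range_succ, Finset.sum_range_one, hc0, zero_mul,
        zero_add] at this
    rcases case3 G hs hclosed hone h3 (c 2) (c 1) hode3 with ⟨l, hl, hG⟩ | hG | ⟨l, hl, hG⟩
    · exact Or.inr (Or.inr (Or.inr (Or.inl ⟨l, hl, hG⟩)))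
    · exact Or.inr (Or.inr (Or.inr (Or.inr (Or.inl hG))))
    · exact Or.inr (Or.inr (Or.inr (Or.inr (Or.inr ⟨l, hl, hG⟩))))
end

section
/- Let P ⊂ SL(3,ℝ) be the upper triangular subgroup. The distinguished curve t ↦ u·exp(tE_{21}) mod P, where u = I + E_{12}, admits a projective reparameterisation: there exist an upper triangular unipotent r ∈ P and a strictly lower triangular Y such that exp(−(t/(t+1))Y)·r·exp(tE_{21}) is upper triangular for all t ≠ −1. Explicitly, one may take Y = E_{21} and r = I + E_{12} + b·E_{13} + c·E_{23} for suitable b, c. -/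
open Matrix

/-! Since `E₂₁² = 0`, both exponentials are `I + sE₂₁`, and the product is computed entrywise:
its only subdiagonal entry that can be nonzero is `t - s(1 + t)` with `s = t/(t+1)`, which
vanishes. Any `b`, `c` work, so we take `b = c = 0`. -/

theorem NormedSpace.exp_eq_one_add_of_sq_eq_zero {𝔸 : Type*} [Ring 𝔸] [Algebra ℚ 𝔸]
    [TopologicalSpace 𝔸] [IsTopologicalRing 𝔸] {a : 𝔸} (ha : a ^ 2 = 0) :
    NormedSpace.exp a = 1 + a := by
  have hpow : ∀ n ∉ Finset.range 2, (n.factorial⁻¹ : ℚ) • a ^ n = 0 := fun n hn => by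
    rw [pow_eq_zero_of_le (Nat.succ_le_of_lt (by simpa using hn)) ha, smul_zero]
  rw [NormedSpace.exp_eq_tsum_rat]
  dsimp only
  rw [tsum_eq_sum hpow]
  simp [Finset.sum_range_succ]

theorem Matrix.exp_single_of_ne {n R : Type*} [Fintype n] [DecidableEq n] [CommRing R]
    [Algebra ℚ R] [TopologicalSpace R] [IsTopologicalRing R] {i j : n} (hij : i ≠ j) (a : R) :
    NormedSpace.exp (single i j a) = 1 + single i j a :=
  NormedSpace.exp_eq_one_add_of_sq_eq_zero <|
    (sq _).trans <| single_mul_single_of_ne a i j i hij.symm a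

theorem one_add_single_mul_upperUnipotent_mul_one_add_single (s t b c : ℝ) :
    (1 + single (1 : Fin 3) 0 (-s)) * (1 + single 0 1 1 + b • single 0 2 1 + c • single 1 2 1)
        * (1 + single 1 0 t)
      = !![1 + t, 1, b; t - s * (1 + t), 1 - s, c - s * b; 0, 0, 1] := by
  ext i j
  fin_cases i <;> fin_cases j <;>
    simp [mul_apply, Fin.sum_univ_succ, one_apply, single] <;> ring

/-- The distinguished curve `t ↦ (I + E₁₂)·exp(tE₂₁) mod P` in `SL(3,ℝ)/P` (`P` upper
triangular) admits a projective reparameterisation: with `Y = E₂₁` and suitable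
`r = I + E₁₂ + bE₁₃ + cE₂₃`, the matrix `exp(−(t/(t+1))Y)·r·exp(tE₂₁)` is upper triangular
for all `t ≠ −1`. -/
theorem stmt15 :
    ∃ b c : ℝ, ∀ t : ℝ, t ≠ -1 → ∀ i j : Fin 3, (j : ℕ) < (i : ℕ) →
      (NormedSpace.exp (-(t / (t + 1)) • single (1 : Fin 3) (0 : Fin 3) (1 : ℝ))
        * (1 + single (0 : Fin 3) (1 : Fin 3) (1 : ℝ)
            + b • single (0 : Fin 3) (2 : Fin 3) (1 : ℝ)
            + c • single (1 : Fin 3) (2 : Fin 3) (1 : ℝ))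
        * NormedSpace.exp (t • single (1 : Fin 3) (0 : Fin 3) (1 : ℝ))) i j = 0 := by
  refine ⟨0, 0, fun t ht i j hji => ?_⟩
  have hexp (a : ℝ) : NormedSpace.exp (a • single (1 : Fin 3) (0 : Fin 3) 1) =
      1 + single (1 : Fin 3) (0 : Fin 3) a := by
    rw [smul_single, smul_eq_mul, mul_one, exp_single_of_ne (by decide)]
  have hcancel : t - t / (t + 1) * (1 + t) = 0 := by
    have : t + 1 ≠ 0 := by contrapose! ht; linarith
    rw [add_comm 1 t, div_mul_cancel₀ t this, sub_self]
  rw [hexp, hexp, one_add_single_mul_upperUnipotent_mul_one_add_single]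
  fin_cases i <;> fin_cases j <;> simp_all
end

section
/- Let P ⊂ SL(3,ℝ) be the upper triangular subgroup and X = E_{21} + E_{31} + E_{32}. There do NOT exist an upper triangular unipotent matrix r and a strictly lower triangular matrix Y such that exp(−(t/(t+1))Y)·r·exp(tX) is upper triangular for all t in a neighbourhood of 0; hence the distinguished curve t ↦ exp(tX) mod P admits only affine reparameterisations. -/
/-!
Both exponents are nilpotent of order three, so with `u = t/(t+1)` every entry of
`exp(-uY) · r · exp(tX)` is a polynomial in `u` and `t`. Multiplying the three lower entries by
`(t+1)²/t` gives polynomial identities in `t` on a punctured neighbourhood of `0`, whose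
coefficients must therefore vanish. If `p, q, w` are the entries `(1,0), (2,0), (2,1)` of `Y`
and `k = q + pw/2`, four of these coefficient equations force `(k-1)²(2k-1) = 0`, and each
root contradicts the remaining ones.
-/

open Matrix Filter Topology Polynomial

theorem NormedSpace.exp_eq_sum_range_of_pow_eq_zero (𝕂 : Type*) {𝔸 : Type*} [Field 𝕂]
    [CharZero 𝕂] [Ring 𝔸] [Algebra 𝕂 𝔸] [TopologicalSpace 𝔸] [IsTopologicalRing 𝔸] {x : 𝔸}
    {n : ℕ} (hx : x ^ n = 0) :
    exp x = ∑ i ∈ Finset.range n, (i.factorial⁻¹ : 𝕂) • x ^ i := by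
  rw [exp_eq_tsum 𝕂]
  refine tsum_eq_sum fun i hi => ?_
  rw [pow_eq_zero_of_le (by simpa using hi) hx, smul_zero]

theorem Matrix.exp_smul_fin_three_strictLower {𝕂 : Type*} [Field 𝕂] [CharZero 𝕂]
    [TopologicalSpace 𝕂] [IsTopologicalRing 𝕂] (s p q w : 𝕂) :
    NormedSpace.exp (s • !![0, 0, 0; p, 0, 0; q, w, 0]) =
      !![1, 0, 0; s * p, 1, 0; s * q + s ^ 2 * p * w / 2, s * w, 1] := by
  have hcube : (s • !![0, 0, 0; p, 0, 0; q, w, 0]) ^ 3 = 0 := by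
    ext i j
    fin_cases i <;> fin_cases j <;> simp [pow_succ, mul_apply, Fin.sum_univ_three]
  rw [NormedSpace.exp_eq_sum_range_of_pow_eq_zero 𝕂 hcube]
  ext i j
  fin_cases i <;> fin_cases j <;> simp [Finset.sum_range_succ, pow_succ]
  ring

theorem Matrix.exists_eq_of_unitriangular_fin_three {α : Type*} [Zero α] [One α]
    (r : Matrix (Fin 3) (Fin 3) α) (hlower : ∀ i j : Fin 3, (j : ℕ) < i → r i j = 0)
    (hdiag : ∀ i, r i i = 1) : ∃ a b c, r = !![1, a, b; 0, 1, c; 0, 0, 1] :=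
  ⟨r 0 1, r 0 2, r 1 2, by
    ext i j
    fin_cases i <;> fin_cases j <;> simp [hdiag, hlower]⟩

theorem Matrix.exists_eq_of_strictLower_fin_three {α : Type*} [Zero α]
    (Y : Matrix (Fin 3) (Fin 3) α) (hupper : ∀ i j : Fin 3, (i : ℕ) ≤ j → Y i j = 0) :
    ∃ p q w, Y = !![0, 0, 0; p, 0, 0; q, w, 0] :=
  ⟨Y 1 0, Y 2 0, Y 2 1, by ext i j; fin_cases i <;> fin_cases j <;> simp [hupper]⟩

theorem Polynomial.eq_zero_of_eventually_eval_eq_zero {𝕜 : Type*} [NontriviallyNormedField 𝕜]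
    {P : 𝕜[X]} {x : 𝕜} (h : ∀ᶠ t in 𝓝[≠] x, P.eval t = 0) : P = 0 := by
  obtain ⟨V, hV, hVP⟩ := mem_nhdsWithin_iff_exists_mem_nhds_inter.mp h
  exact eq_zero_of_infinite_isRoot P
    (((infinite_of_mem_nhds x hV).sdiff (Set.finite_singleton x)).mono hVP)

theorem eq_zero_of_eventually_sum_mul_pow_eq_zero {𝕜 : Type*} [NontriviallyNormedField 𝕜]
    {n : ℕ} {a : Fin n → 𝕜} (h : ∀ᶠ t in 𝓝[≠] (0 : 𝕜), ∑ i, a i * t ^ (i : ℕ) = 0) :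
    a = 0 := by
  have hP : ∑ i, C (a i) * X ^ (i : ℕ) = 0 :=
    eq_zero_of_eventually_eval_eq_zero (by simpa [eval_finsetSum] using h)
  ext j
  simpa [finsetSum_coeff, coeff_C_mul_X_pow, Fin.val_inj] using congrArg (coeff · j) hP

theorem coefficient_identities_of_upperTriangular {a b c p q w t : ℝ} (ht0 : t ≠ 0)
    (ht1 : t + 1 ≠ 0)
    (h : ∀ i j : Fin 3, (j : ℕ) < (i : ℕ) →
      (NormedSpace.exp (-(t / (t + 1)) • !![0, 0, 0; p, 0, 0; q, w, 0])
        * !![1, a, b; 0, 1, c; 0, 0, 1]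
        * NormedSpace.exp (t • (single (1 : Fin 3) (0 : Fin 3) (1 : ℝ)
            + single (2 : Fin 3) (0 : Fin 3) (1 : ℝ)
            + single (2 : Fin 3) (1 : Fin 3) (1 : ℝ)))) i j = 0) :
    ∑ i, ![1 + c - p, 1 + 3 / 2 * c - p * (a + b), (c - p * b) / 2] i * t ^ (i : ℕ) = 0 ∧
    ∑ i, ![1 - q, 5 / 2 - q * (a + b) - (q + p * w / 2),
      2 - q * b / 2 - (q + p * w / 2) * (a + b), (1 - (q + p * w / 2) * b) / 2] i
        * t ^ (i : ℕ) = 0 ∧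
    ∑ i, ![1 - q * a - w, 2 - q * (a + b) + p * w * a / 2 - w * (1 + c),
      1 - q * b + p * w * b / 2 - w * c] i * t ^ (i : ℕ) = 0 := by
  have hX : single (1 : Fin 3) (0 : Fin 3) (1 : ℝ) + single 2 0 1 + single 2 1 1 =
      !![0, 0, 0; 1, 0, 0; 1, 1, 0] := by
    ext i j
    fin_cases i <;> fin_cases j <;> simp [single]
  rw [hX] at h
  simp only [exp_smul_fin_three_strictLower] at h
  have h₁₀ := h 1 0 (by decide)
  have h₂₀ := h 2 0 (by decide)
  have h₂₁ := h 2 1 (by decide)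
  simp only [mul_fin_three, of_apply, cons_val, cons_val', empty_val', cons_val_fin_one]
    at h₁₀ h₂₀ h₂₁
  generalize hu : t / (t + 1) = u at h₁₀ h₂₀ h₂₁
  have hu' : u * (t + 1) = t := hu ▸ div_mul_cancel₀ t ht1
  set v₀ := 1 + a * t + b * (t + t ^ 2 / 2)
  refine ⟨?_, ?_, ?_⟩ <;> apply mul_left_cancel₀ ht0 <;>
    simp only [Fin.sum_univ_succ, Fin.sum_univ_zero, cons_val_zero, cons_val_succ, Fin.val_zero,
      Fin.val_succ]
  · linear_combination (t + 1) * h₁₀ + p * v₀ * hu'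
  · -- adding `u w h₁₀` eliminates the entry `(1,0)` of `r * exp (t • X)`
    linear_combination (t + 1) ^ 2 * (h₂₀ + u * w * h₁₀)
      + (q * (t + 1) + p * w / 2 * (u * (t + 1) + t)) * v₀ * hu'
  · linear_combination (t + 1) ^ 2 * h₂₁
      + ((t + 1) * (q * (a + b * t) + w * (1 + c * t))
        - p * w / 2 * (a + b * t) * (u * (t + 1) + t)) * hu'

theorem coefficient_system_inconsistent {a b c p q w : ℝ}
    (h₁ : ![1 + c - p, 1 + 3 / 2 * c - p * (a + b), (c - p * b) / 2] = 0)
    (h₂ : ![1 - q, 5 / 2 - q * (a + b) - (q + p * w / 2),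
      2 - q * b / 2 - (q + p * w / 2) * (a + b), (1 - (q + p * w / 2) * b) / 2] = 0)
    (h₃ : ![1 - q * a - w, 2 - q * (a + b) + p * w * a / 2 - w * (1 + c),
      1 - q * b + p * w * b / 2 - w * c] = 0) : False := by
  simp only [cons_eq_zero_iff, zero_empty, and_true] at h₁ h₂ h₃
  obtain ⟨hp, -, hc⟩ := h₁
  obtain ⟨hq, hS, hkS, hkb⟩ := h₂
  obtain ⟨ha, h₃₁, -⟩ := h₃
  obtain rfl : q = 1 := by linarith
  generalize hk : 1 + p * w / 2 = k at hS hkS hkb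
  have hpb : p * (1 - b) = 1 := by linear_combination -hp + 2 * hc
  have hcubic : (k - 1) ^ 2 * (2 * k - 1) = 0 := by
    linear_combination 2 * k * hkS - 2 * hkb - 2 * k ^ 2 * hS
  rcases mul_eq_zero.mp hcubic with h | h
  · obtain rfl : k = 1 := by simpa [sub_eq_zero] using h
    obtain rfl : b = 1 := by linarith
    norm_num at hpb
  · obtain rfl : k = 1 / 2 := by linarith
    obtain rfl : b = 2 := by linarith
    obtain rfl : p = -1 := by linarith
    obtain rfl : w = 1 := by linarith
    obtain rfl : a = 0 := by linarith
    obtain rfl : c = -2 := by linarith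
    norm_num at h₃₁

/-- For `X = E₂₁ + E₃₁ + E₃₂` there are no upper triangular unipotent `r` and strictly lower
triangular `Y` with `exp(−(t/(t+1))Y)·r·exp(tX)` upper triangular for all `t` near `0`; hence
the distinguished curve `t ↦ exp(tX) mod P` admits only affine reparameterisations. -/
theorem stmt16 :
    ¬ ∃ r Y : Matrix (Fin 3) (Fin 3) ℝ,
      (∀ i j : Fin 3, (j : ℕ) < (i : ℕ) → r i j = 0) ∧ (∀ i : Fin 3, r i i = 1) ∧
      (∀ i j : Fin 3, (i : ℕ) ≤ (j : ℕ) → Y i j = 0) ∧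
      ∃ U ∈ nhds (0 : ℝ), ∀ t ∈ U, ∀ i j : Fin 3, (j : ℕ) < (i : ℕ) →
        (NormedSpace.exp (-(t / (t + 1)) • Y) * r
          * NormedSpace.exp (t • (single (1 : Fin 3) (0 : Fin 3) (1 : ℝ)
              + single (2 : Fin 3) (0 : Fin 3) (1 : ℝ)
              + single (2 : Fin 3) (1 : Fin 3) (1 : ℝ)))) i j = 0 := by
  rintro ⟨r, Y, hr_lower, hr_diag, hY_upper, U, hU, hM⟩
  obtain ⟨a, b, c, rfl⟩ := exists_eq_of_unitriangular_fin_three r hr_lower hr_diag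
  obtain ⟨p, q, w, rfl⟩ := exists_eq_of_strictLower_fin_three Y hY_upper
  have hgood : ∀ᶠ t in 𝓝[≠] (0 : ℝ), t ≠ 0 ∧ t + 1 ≠ 0 ∧ t ∈ U := by
    have hne : ∀ᶠ t in 𝓝 (0 : ℝ), t + 1 ≠ 0 :=
      (continuous_add_const 1).continuousAt.eventually_ne (by norm_num)
    filter_upwards [self_mem_nhdsWithin, nhdsWithin_le_nhds hne, nhdsWithin_le_nhds hU]
      with t ht0 ht1 htU using ⟨ht0, ht1, htU⟩
  have hcoeff := hgood.mono fun t ht =>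
    coefficient_identities_of_upperTriangular ht.1 ht.2.1 (hM t ht.2.2)
  exact coefficient_system_inconsistent
    (eq_zero_of_eventually_sum_mul_pow_eq_zero (hcoeff.mono fun _ h => h.1))
    (eq_zero_of_eventually_sum_mul_pow_eq_zero (hcoeff.mono fun _ h => h.2.1))
    (eq_zero_of_eventually_sum_mul_pow_eq_zero (hcoeff.mono fun _ h => h.2.2))
end
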